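/- arXiv:1710.08856 — 6 statements merged into one kernel-verified Lean document; each statement's English description precedes it below -/
import Mathlib

section
/- Let a > 0, let μ_a be the probability measure on ℕ with μ_a({n}) = (1/Z_a) · aⁿ/(n!)², Z_a = Σ_{k≥0} a^k/(k!)², and let 𝒜_a f(n) = a(f(n+1) − f(n)) + n²(f(n−1) − f(n)) for n ≥ 1, 𝒜_a f(0) = a(f(1) − f(0)). Then for every function g : ℕ → ℝ satisfying |g(m) − g(n)| ≤ |m − n| for all m, n and Σ_{n≥0} μ_a({n}) g(n) = 0, there exists a function f : ℕ → ℝ with |f(n+1) − f(n)| ≤ 9 for all n ∈ ℕ such that 𝒜_a f(n) = g(n) for all n ∈ ℕ. -/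
/-!
The chain is reversible with respect to `π k = a ^ k / (k!) ^ 2`: detailed balance reads
`a π k = (k + 1) ^ 2 π (k + 1)`. Hence `𝒜_a f = g` is solved by the `f` with `f 0 = 0` and
increments `f (n + 1) - f n = H n / (a π n)`, where `H n = ∑_{k ≤ n} π k g k`.

For the gradient bound, the mean-zero condition gives `H n = -∑_{k > n} π k g k`; centring both
sums at `g n` and using the Lipschitz bound, `Z |H n| ≤ n A B + A ∑_{k > n} (k - n) π k`, with
head `A = ∑_{k ≤ n} π k` (`besselHead`), tail `B = ∑_{k > n} π k` (`besselTail`) and `Z = A + B`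
(`besselMass`). The ratio `π (k + 1) / π k = a / (k + 1) ^ 2` makes `π` unimodal with mode near
`√a`, so the head or the tail is at most `(n + 1) π n`, giving `A B ≤ (n + 1) π n Z`; beyond
`(n + 1) ^ 2 > 4 a` the tail is dominated by a geometric series with ratio below `1 / 4`. In both
regimes `|H n| ≤ 6 a π n`, so the increments of `f` are bounded by `6`.
-/

/-- The weight `μ_a({n}) = (aⁿ/(n!)²) / Z_a` with `Z_a = ∑_{k≥0} a^k/(k!)²`. -/
noncomputable def besselWeight (a : ℝ) (n : ℕ) : ℝ :=
  (a ^ n / (n.factorial : ℝ) ^ 2) / ∑' k : ℕ, a ^ k / (k.factorial : ℝ) ^ 2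

/-- The Stein (birth–death) operator `𝒜_a f(n) = a(f(n+1) − f(n)) + n²(f(n−1) − f(n))`
(for `n = 0` the death term vanishes since its coefficient `n² = 0`). -/
noncomputable def steinOp (a : ℝ) (f : ℕ → ℝ) (n : ℕ) : ℝ :=
  a * (f (n + 1) - f n) + (n : ℝ) ^ 2 * (f (n - 1) - f n)

open Finset

noncomputable def besselTerm (a : ℝ) (k : ℕ) : ℝ := a ^ k / (k.factorial : ℝ) ^ 2

noncomputable def besselMass (a : ℝ) : ℝ := ∑' k, besselTerm a k

noncomputable def besselHead (a : ℝ) (n : ℕ) : ℝ := ∑ k ∈ range (n + 1), besselTerm a k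

noncomputable def besselTail (a : ℝ) (n : ℕ) : ℝ := ∑' j, besselTerm a (j + (n + 1))

section Bessel

variable {a : ℝ}

lemma besselTerm_pos (ha : 0 < a) (k : ℕ) : 0 < besselTerm a k := by
  unfold besselTerm; positivity

lemma besselTerm_succ (a : ℝ) (k : ℕ) :
    besselTerm a (k + 1) = besselTerm a k * (a / ((k : ℝ) + 1) ^ 2) := by
  simp only [besselTerm, Nat.factorial_succ, pow_succ, Nat.cast_mul, Nat.cast_succ]
  have : ((k.factorial : ℝ)) ≠ 0 := Nat.cast_ne_zero.2 k.factorial_ne_zero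
  field_simp

lemma sq_mul_besselTerm_succ (a : ℝ) (k : ℕ) :
    ((k : ℝ) + 1) ^ 2 * besselTerm a (k + 1) = a * besselTerm a k := by
  rw [besselTerm_succ]; field_simp

lemma summable_besselTerm (a : ℝ) : Summable (besselTerm a) := by
  refine .of_norm_bounded (Real.summable_pow_div_factorial |a|) fun k => ?_
  rw [Real.norm_eq_abs, besselTerm, abs_div, abs_pow, abs_pow, Nat.abs_cast]
  have hf : (1 : ℝ) ≤ k.factorial := mod_cast k.factorial_pos
  gcongr
  nlinarith

lemma summable_natCast_mul_besselTerm (a : ℝ) :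
    Summable fun k : ℕ => (k : ℝ) * besselTerm a k := by
  refine .of_norm_bounded (Real.summable_pow_div_factorial |a|) fun k => ?_
  rw [Real.norm_eq_abs, abs_mul, Nat.abs_cast, besselTerm, abs_div, abs_pow, abs_pow,
    Nat.abs_cast]
  have hk : (k : ℝ) ≤ k.factorial := mod_cast k.self_le_factorial
  have hf : (0 : ℝ) < k.factorial := mod_cast k.factorial_pos
  rw [mul_div_assoc', div_le_div_iff₀ (by positivity) hf]
  calc (k : ℝ) * |a| ^ k * k.factorial ≤ k.factorial * |a| ^ k * k.factorial := by gcongr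
    _ = _ := by ring

lemma besselMass_pos (ha : 0 < a) : 0 < besselMass a :=
  (summable_besselTerm a).tsum_pos (fun k => (besselTerm_pos ha k).le) 0 (besselTerm_pos ha 0)

lemma besselHead_add_besselTail (a : ℝ) (n : ℕ) :
    besselHead a n + besselTail a n = besselMass a :=
  (summable_besselTerm a).sum_add_tsum_nat_add (n + 1)

lemma besselHead_pos (ha : 0 < a) (n : ℕ) : 0 < besselHead a n :=
  sum_pos (fun k _ => besselTerm_pos ha k) nonempty_range_add_one

lemma besselTail_nonneg (ha : 0 < a) (n : ℕ) : 0 ≤ besselTail a n :=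
  tsum_nonneg fun _ => (besselTerm_pos ha _).le

lemma summable_besselTerm_add (a : ℝ) (n : ℕ) : Summable fun j => besselTerm a (j + n) :=
  (summable_nat_add_iff n).2 (summable_besselTerm a)

lemma besselTerm_add_besselTail (a : ℝ) (n : ℕ) :
    besselTerm a n + besselTail a n = ∑' j, besselTerm a (j + n) := by
  rw [(summable_besselTerm_add a n).tsum_eq_zero_add, zero_add, besselTail]
  simp only [add_right_comm _ 1 n, add_assoc]

lemma sq_mul_besselTail_succ_le (ha : 0 < a) (n : ℕ) :
    ((n : ℝ) + 2) ^ 2 * besselTail a (n + 1) ≤ a * besselTail a n := by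
  rw [besselTail, besselTail, ← tsum_mul_left, ← tsum_mul_left]
  refine Summable.tsum_le_tsum (fun j => ?_) ((summable_besselTerm_add a _).mul_left _)
    ((summable_besselTerm_add a _).mul_left _)
  have hj : ((n : ℝ) + 2) ^ 2 ≤ (((j + (n + 1) : ℕ) : ℝ) + 1) ^ 2 := by
    have : (n : ℝ) + 2 ≤ ((j + (n + 1) : ℕ) : ℝ) + 1 := by
      push_cast; linarith [j.cast_nonneg' (α := ℝ)]
    gcongr
  calc ((n : ℝ) + 2) ^ 2 * besselTerm a (j + (n + 1 + 1))
      ≤ (((j + (n + 1) : ℕ) : ℝ) + 1) ^ 2 * besselTerm a (j + (n + 1) + 1) := by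
        rw [← add_assoc]; gcongr; exact (besselTerm_pos ha _).le
    _ = a * besselTerm a (j + (n + 1)) := sq_mul_besselTerm_succ a _

lemma besselTail_le (ha : 0 < a) (n : ℕ) :
    (((n : ℝ) + 2) ^ 2 - a) * besselTail a n ≤ ((n : ℝ) + 2) ^ 2 * besselTerm a (n + 1) := by
  have hsplit : besselTerm a (n + 1) + besselTail a (n + 1) = besselTail a n :=
    besselTerm_add_besselTail a (n + 1)
  linear_combination (sq_mul_besselTail_succ_le ha n) - ((n : ℝ) + 2) ^ 2 * hsplit

lemma besselTerm_le_of_sq_le (ha : 0 < a) {k n : ℕ} (hkn : k ≤ n) (hn : (n : ℝ) ^ 2 ≤ a) :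
    besselTerm a k ≤ besselTerm a n := by
  induction n, hkn using Nat.le_induction with
  | base => rfl
  | succ m _ ih =>
    push_cast at hn
    have hm : (m : ℝ) ^ 2 ≤ a := le_trans (by gcongr; linarith) hn
    calc besselTerm a k ≤ besselTerm a m := ih hm
      _ ≤ besselTerm a (m + 1) := by
        rw [besselTerm_succ]
        exact le_mul_of_one_le_right (besselTerm_pos ha m).le
          ((one_le_div (by positivity)).2 hn)

lemma besselHead_le (ha : 0 < a) {n : ℕ} (hn : (n : ℝ) ^ 2 ≤ a) :
    besselHead a n ≤ ((n : ℝ) + 1) * besselTerm a n := by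
  calc besselHead a n ≤ ∑ _k ∈ range (n + 1), besselTerm a n :=
        sum_le_sum fun k hk =>
          besselTerm_le_of_sq_le ha (Nat.lt_succ_iff.1 (mem_range.1 hk)) hn
    _ = ((n : ℝ) + 1) * besselTerm a n := by simp

lemma besselTail_le_of_lt (ha : 0 < a) {n : ℕ} (hn : a < (n : ℝ) ^ 2) :
    besselTail a n ≤ ((n : ℝ) + 1) * besselTerm a n := by
  have hn0 : (0 : ℝ) ≤ n := n.cast_nonneg
  have hp := besselTerm_pos ha n
  have hc : 0 < ((n : ℝ) + 2) ^ 2 - a := by nlinarith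
  have hpoly :
      ((n : ℝ) + 2) ^ 2 * (n : ℝ) ^ 2 ≤ ((n : ℝ) + 1) ^ 3 * (((n : ℝ) + 2) ^ 2 - a) := by
    have h4 : 4 * ((n : ℝ) + 1) ≤ ((n : ℝ) + 2) ^ 2 - a := by nlinarith
    calc ((n : ℝ) + 2) ^ 2 * (n : ℝ) ^ 2 ≤ ((n : ℝ) + 1) ^ 3 * (4 * ((n : ℝ) + 1)) := by
          nlinarith [mul_nonneg (by positivity : (0 : ℝ) ≤ 2 * ((n : ℝ) + 1) ^ 2 + n * (n + 2))
            (by nlinarith : (0 : ℝ) ≤ 2 * ((n : ℝ) + 1) ^ 2 - n * (n + 2))]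
      _ ≤ _ := by gcongr
  have hnext : ((n : ℝ) + 1) ^ 2 * besselTerm a (n + 1) ≤ (n : ℝ) ^ 2 * besselTerm a n := by
    rw [sq_mul_besselTerm_succ]; gcongr
  refine le_of_mul_le_mul_left ((besselTail_le ha n).trans ?_) hc
  refine le_of_mul_le_mul_left ?_ (by positivity : (0 : ℝ) < ((n : ℝ) + 1) ^ 2)
  calc ((n : ℝ) + 1) ^ 2 * (((n : ℝ) + 2) ^ 2 * besselTerm a (n + 1))
      = ((n : ℝ) + 2) ^ 2 * (((n : ℝ) + 1) ^ 2 * besselTerm a (n + 1)) := by ring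
    _ ≤ ((n : ℝ) + 2) ^ 2 * ((n : ℝ) ^ 2 * besselTerm a n) := by gcongr
    _ ≤ ((n : ℝ) + 1) ^ 3 * (((n : ℝ) + 2) ^ 2 - a) * besselTerm a n := by
      rw [← mul_assoc]; gcongr
    _ = _ := by ring

lemma besselHead_mul_besselTail_le (ha : 0 < a) (n : ℕ) :
    besselHead a n * besselTail a n ≤ ((n : ℝ) + 1) * besselTerm a n * besselMass a := by
  have hS := besselHead_add_besselTail a n
  have hA := besselHead_pos ha n
  have hB := besselTail_nonneg ha n
  rcases le_or_gt ((n : ℝ) ^ 2) a with hn | hn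
  · have hp := besselTerm_pos ha n
    exact mul_le_mul (besselHead_le ha hn) (by linarith) hB (by positivity)
  · calc besselHead a n * besselTail a n ≤ besselMass a * (((n : ℝ) + 1) * besselTerm a n) :=
          mul_le_mul (by linarith) (besselTail_le_of_lt ha hn) hB (besselMass_pos ha).le
      _ = _ := by ring

lemma besselTail_le_of_four_mul_lt (ha : 0 < a) {n : ℕ} (hn : 4 * a < ((n : ℝ) + 1) ^ 2) :
    3 * ((n : ℝ) + 1) ^ 2 * besselTail a n ≤ 4 * a * besselTerm a n := by
  have hB := besselTail_nonneg ha n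
  have h34 : 3 * ((n : ℝ) + 2) ^ 2 ≤ 4 * (((n : ℝ) + 2) ^ 2 - a) := by
    nlinarith [n.cast_nonneg (α := ℝ)]
  have hB' : 3 * besselTail a n ≤ 4 * besselTerm a (n + 1) := by
    refine le_of_mul_le_mul_left ?_ (by positivity : (0 : ℝ) < ((n : ℝ) + 2) ^ 2)
    nlinarith [besselTail_le ha n]
  linear_combination ((n : ℝ) + 1) ^ 2 * hB' + 4 * sq_mul_besselTerm_succ a n

lemma besselHead_besselTail_estimate (ha : 0 < a) (n : ℕ) :
    ((n : ℝ) + 1) * n * besselHead a n * besselTail a n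
        + a * besselHead a n * (besselTerm a n + besselTail a n)
      ≤ 6 * a * besselTerm a n * besselMass a * ((n : ℝ) + 1) := by
  have hS := besselHead_add_besselTail a n
  have hA := besselHead_pos ha n
  have hB := besselTail_nonneg ha n
  have hp := besselTerm_pos ha n
  have hM := besselMass_pos ha
  have hn0 : (0 : ℝ) ≤ n := n.cast_nonneg
  rcases le_or_gt (((n : ℝ) + 1) ^ 2) (4 * a) with hn | hn
  · have hAS : besselHead a n ≤ besselMass a := by linarith
    have hX : 0 ≤ ((n : ℝ) + 1) * besselTerm a n * besselMass a := by positivity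
    calc ((n : ℝ) + 1) * n * besselHead a n * besselTail a n
          + a * besselHead a n * (besselTerm a n + besselTail a n)
        = ((n : ℝ) + 1) * n * (besselHead a n * besselTail a n)
          + a * besselTerm a n * besselHead a n + a * (besselHead a n * besselTail a n) := by ring
      _ ≤ ((n : ℝ) + 1) * n * (((n : ℝ) + 1) * besselTerm a n * besselMass a)
          + a * besselTerm a n * besselMass a
          + a * (((n : ℝ) + 1) * besselTerm a n * besselMass a) := by
        have hAB := besselHead_mul_besselTail_le ha n
        gcongr
      _ ≤ 6 * a * besselTerm a n * besselMass a * ((n : ℝ) + 1) := by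
        nlinarith [mul_le_mul_of_nonneg_right (by nlinarith : (n : ℝ) * (n + 1) ≤ 4 * a) hX,
          mul_nonneg (by positivity : 0 ≤ a * besselTerm a n * besselMass a) hn0]
  · have hB' := besselTail_le_of_four_mul_lt ha hn
    have hB3 : 3 * besselTail a n ≤ besselTerm a n := by
      refine le_of_mul_le_mul_left ?_ (by positivity : (0 : ℝ) < ((n : ℝ) + 1) ^ 2)
      nlinarith
    have hAB : 0 ≤ besselHead a n * besselTail a n := mul_nonneg hA.le hB
    have haπ : 0 ≤ a * besselTerm a n := by positivity
    nlinarith [mul_le_mul_of_nonneg_left hB' hA.le,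
      mul_le_mul_of_nonneg_left hB3 (mul_nonneg ha.le hA.le),
      mul_le_mul_of_nonneg_right (by nlinarith : ((n : ℝ) + 1) * n ≤ ((n : ℝ) + 1) ^ 2) hAB,
      mul_le_mul_of_nonneg_left (by linarith : besselHead a n ≤ besselMass a) haπ,
      mul_nonneg (mul_nonneg haπ hM.le) hn0]

lemma summable_succ_mul_besselTerm_add (ha : 0 < a) (n : ℕ) :
    Summable fun j : ℕ => ((j : ℝ) + 1) * besselTerm a (j + (n + 1)) := by
  refine ((summable_nat_add_iff (n + 1)).2 (summable_natCast_mul_besselTerm a)).of_nonneg_of_le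
    (fun j => mul_nonneg (by positivity) (besselTerm_pos ha _).le) fun j => ?_
  have := (besselTerm_pos ha (j + (n + 1))).le
  gcongr
  push_cast
  linarith [n.cast_nonneg' (α := ℝ)]

lemma succ_mul_tsum_succ_mul_besselTerm_add_le (ha : 0 < a) (n : ℕ) :
    ((n : ℝ) + 1) * ∑' j : ℕ, ((j : ℝ) + 1) * besselTerm a (j + (n + 1))
      ≤ a * (besselTerm a n + besselTail a n) := by
  rw [besselTerm_add_besselTail, ← tsum_mul_left, ← tsum_mul_left]
  refine Summable.tsum_le_tsum (fun j => ?_)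
    ((summable_succ_mul_besselTerm_add ha n).mul_left _) ((summable_besselTerm_add a n).mul_left _)
  have hj : ((n : ℝ) + 1) * ((j : ℝ) + 1) ≤ (((j + n : ℕ) : ℝ) + 1) ^ 2 := by
    push_cast; nlinarith [j.cast_nonneg' (α := ℝ), n.cast_nonneg' (α := ℝ)]
  calc ((n : ℝ) + 1) * (((j : ℝ) + 1) * besselTerm a (j + (n + 1)))
      = ((n : ℝ) + 1) * ((j : ℝ) + 1) * besselTerm a (j + n + 1) := (mul_assoc _ _ _).symm
    _ ≤ (((j + n : ℕ) : ℝ) + 1) ^ 2 * besselTerm a (j + n + 1) := by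
      have := (besselTerm_pos ha (j + n + 1)).le
      gcongr
    _ = a * besselTerm a (j + n) := sq_mul_besselTerm_succ a _

noncomputable def besselPartialSum (a : ℝ) (g : ℕ → ℝ) (n : ℕ) : ℝ :=
  ∑ k ∈ range (n + 1), besselTerm a k * g k

noncomputable def steinSolution (a : ℝ) (g : ℕ → ℝ) (n : ℕ) : ℝ :=
  ∑ k ∈ range n, besselPartialSum a g k / (a * besselTerm a k)

variable {g : ℕ → ℝ}

lemma tsum_besselWeight_mul (a : ℝ) (g : ℕ → ℝ) :
    ∑' k, besselWeight a k * g k = (∑' k, besselTerm a k * g k) / besselMass a := by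
  rw [← tsum_div_const]
  exact tsum_congr fun k => div_mul_eq_mul_div _ _ _

lemma summable_besselTerm_mul (ha : 0 < a) (hg : ∀ m n : ℕ, |g m - g n| ≤ |(m : ℝ) - n|) :
    Summable fun k => besselTerm a k * g k := by
  refine .of_norm_bounded (((summable_besselTerm a).mul_right |g 0|).add
    (summable_natCast_mul_besselTerm a)) fun k => ?_
  have hk : |g k| ≤ |g 0| + k := by
    have := hg k 0
    rw [Nat.cast_zero, sub_zero, Nat.abs_cast] at this
    linarith [abs_sub_abs_le_abs_sub (g k) (g 0)]
  have hp := besselTerm_pos ha k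
  rw [Real.norm_eq_abs, abs_mul, abs_of_pos hp]
  nlinarith

lemma abs_sum_besselTerm_mul_sub_le (ha : 0 < a) (hg : ∀ m n : ℕ, |g m - g n| ≤ |(m : ℝ) - n|)
    (n : ℕ) : |∑ k ∈ range (n + 1), besselTerm a k * (g k - g n)| ≤ n * besselHead a n := by
  rw [besselHead, mul_sum]
  refine (abs_sum_le_sum_abs _ _).trans (sum_le_sum fun k hk => ?_)
  have hkn : (k : ℝ) ≤ n := mod_cast Nat.lt_succ_iff.1 (mem_range.1 hk)
  rw [abs_mul, abs_of_pos (besselTerm_pos ha k), mul_comm (n : ℝ)]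
  refine mul_le_mul_of_nonneg_left ?_ (besselTerm_pos ha k).le
  calc |g k - g n| ≤ |(k : ℝ) - n| := hg k n
    _ = n - k := by rw [abs_sub_comm, abs_of_nonneg (by linarith)]
    _ ≤ n := by linarith [k.cast_nonneg' (α := ℝ)]

lemma abs_besselTerm_add_mul_sub_le (ha : 0 < a) (hg : ∀ m n : ℕ, |g m - g n| ≤ |(m : ℝ) - n|)
    (n j : ℕ) :
    |besselTerm a (j + (n + 1)) * (g (j + (n + 1)) - g n)|
      ≤ ((j : ℝ) + 1) * besselTerm a (j + (n + 1)) := by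
  have hp := besselTerm_pos ha (j + (n + 1))
  have hdist : |((j + (n + 1) : ℕ) : ℝ) - n| = (j : ℝ) + 1 := by
    push_cast
    rw [abs_of_nonneg (by linarith [j.cast_nonneg' (α := ℝ)])]
    ring
  rw [abs_mul, abs_of_pos hp, mul_comm, ← hdist]
  exact mul_le_mul_of_nonneg_right (hg _ _) hp.le

lemma succ_mul_abs_tsum_besselTerm_add_mul_sub_le (ha : 0 < a)
    (hg : ∀ m n : ℕ, |g m - g n| ≤ |(m : ℝ) - n|) (n : ℕ) :
    ((n : ℝ) + 1) * |∑' j, besselTerm a (j + (n + 1)) * (g (j + (n + 1)) - g n)|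
      ≤ a * (besselTerm a n + besselTail a n) := by
  refine le_trans ?_ (succ_mul_tsum_succ_mul_besselTerm_add_le ha n)
  have hR : ‖∑' j, besselTerm a (j + (n + 1)) * (g (j + (n + 1)) - g n)‖
      ≤ ∑' j : ℕ, ((j : ℝ) + 1) * besselTerm a (j + (n + 1)) :=
    tsum_of_norm_bounded (summable_succ_mul_besselTerm_add ha n).hasSum
      (abs_besselTerm_add_mul_sub_le ha hg n)
  gcongr
  exact hR

lemma summable_besselTerm_add_mul_sub (ha : 0 < a)
    (hg : ∀ m n : ℕ, |g m - g n| ≤ |(m : ℝ) - n|) (n : ℕ) :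
    Summable fun j => besselTerm a (j + (n + 1)) * (g (j + (n + 1)) - g n) :=
  .of_norm_bounded (summable_succ_mul_besselTerm_add ha n)
    (abs_besselTerm_add_mul_sub_le ha hg n)

lemma abs_besselPartialSum_le (ha : 0 < a) (hg : ∀ m n : ℕ, |g m - g n| ≤ |(m : ℝ) - n|)
    (hmean : ∑' k, besselTerm a k * g k = 0) (n : ℕ) :
    |besselPartialSum a g n| ≤ 6 * a * besselTerm a n := by
  set L := ∑ k ∈ range (n + 1), besselTerm a k * (g k - g n)
  set R := ∑' j, besselTerm a (j + (n + 1)) * (g (j + (n + 1)) - g n)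
  have hHL : besselPartialSum a g n = L + g n * besselHead a n := by
    rw [besselPartialSum, besselHead, mul_sum, ← sum_add_distrib]
    exact sum_congr rfl fun k _ => by ring
  have hHR : besselPartialSum a g n + (R + g n * besselTail a n) = 0 := by
    rw [besselTail, ← tsum_mul_left, ← (summable_besselTerm_add_mul_sub ha hg n).tsum_add
      ((summable_besselTerm_add a _).mul_left _), ← hmean,
      ← (summable_besselTerm_mul ha hg).sum_add_tsum_nat_add (n + 1)]
    congr 1
    exact tsum_congr fun j => by ring
  have hSH :
      besselMass a * besselPartialSum a g n = besselTail a n * L - besselHead a n * R := by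
    linear_combination (besselPartialSum a g n) * (besselHead_add_besselTail a n).symm
      + besselTail a n * hHL + besselHead a n * hHR
  have hA := besselHead_pos ha n
  have hB := besselTail_nonneg ha n
  have hM := besselMass_pos ha
  have hn : (0 : ℝ) < n + 1 := by positivity
  refine le_of_mul_le_mul_right ?_ (mul_pos hM hn)
  calc |besselPartialSum a g n| * (besselMass a * (n + 1))
      = (n + 1) * |besselTail a n * L - besselHead a n * R| := by
        rw [← hSH, abs_mul, abs_of_pos hM]; ring
    _ ≤ (n + 1) * (besselTail a n * |L| + besselHead a n * |R|) := by
        rw [← abs_of_nonneg hB, ← abs_of_pos hA, ← abs_mul, ← abs_mul, abs_of_nonneg hB,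
          abs_of_pos hA]
        gcongr
        exact abs_sub _ _
    _ ≤ (n + 1) * n * besselHead a n * besselTail a n
          + a * besselHead a n * (besselTerm a n + besselTail a n) := by
        nlinarith [mul_le_mul_of_nonneg_left (abs_sum_besselTerm_mul_sub_le ha hg n)
            (mul_nonneg hn.le hB),
          mul_le_mul_of_nonneg_left (succ_mul_abs_tsum_besselTerm_add_mul_sub_le ha hg n) hA.le]
    _ ≤ 6 * a * besselTerm a n * besselMass a * (n + 1) := besselHead_besselTail_estimate ha n
    _ = 6 * a * besselTerm a n * (besselMass a * (n + 1)) := by ring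

lemma steinSolution_succ_sub (a : ℝ) (g : ℕ → ℝ) (n : ℕ) :
    steinSolution a g (n + 1) - steinSolution a g n
      = besselPartialSum a g n / (a * besselTerm a n) := by
  rw [steinSolution, steinSolution, sum_range_succ, add_sub_cancel_left]

lemma abs_steinSolution_succ_sub_le (ha : 0 < a) (hg : ∀ m n : ℕ, |g m - g n| ≤ |(m : ℝ) - n|)
    (hmean : ∑' k, besselTerm a k * g k = 0) (n : ℕ) :
    |steinSolution a g (n + 1) - steinSolution a g n| ≤ 6 := by
  have hap := mul_pos ha (besselTerm_pos ha n)
  rw [steinSolution_succ_sub, abs_div, abs_of_pos hap, div_le_iff₀ hap]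
  exact abs_besselPartialSum_le ha hg hmean n |>.trans_eq (by ring)

lemma steinOp_steinSolution (ha : 0 < a) (g : ℕ → ℝ) (n : ℕ) :
    steinOp a (steinSolution a g) n = g n := by
  cases n with
  | zero =>
    have hp := besselTerm_pos ha 0
    simp only [steinOp, steinSolution_succ_sub, besselPartialSum, zero_add, sum_range_one]
    field_simp
    ring
  | succ n =>
    have hp := besselTerm_pos ha n
    have hp' := besselTerm_pos ha (n + 1)
    have hbal := sq_mul_besselTerm_succ a n
    rw [steinOp, Nat.add_sub_cancel, steinSolution_succ_sub, ← neg_sub, steinSolution_succ_sub,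
      besselPartialSum, sum_range_succ, ← besselPartialSum]
    push_cast
    field_simp
    linear_combination (-besselPartialSum a g n) * hbal

end Bessel

/-- **Solution of the Stein equation with gradient bound `9`.**
For every `1`-Lipschitz `g : ℕ → ℝ` with `∑_n μ_a({n}) g(n) = 0` there is an
`f : ℕ → ℝ` with `|f(n+1) − f(n)| ≤ 9` for all `n` solving `𝒜_a f = g`. -/
theorem steinOp_solution_gradient_bound (a : ℝ) (ha : 0 < a)
    (g : ℕ → ℝ) (hLip : ∀ m n : ℕ, |g m - g n| ≤ |(m : ℝ) - (n : ℝ)|)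
    (hmean : ∑' n : ℕ, besselWeight a n * g n = 0) :
    ∃ f : ℕ → ℝ, (∀ n : ℕ, |f (n + 1) - f n| ≤ 9) ∧ ∀ n : ℕ, steinOp a f n = g n := by
  rw [tsum_besselWeight_mul, div_eq_zero_iff, or_iff_left (besselMass_pos ha).ne'] at hmean
  exact ⟨steinSolution a g,
    fun n => (abs_steinSolution_succ_sub_le ha hLip hmean n).trans (by norm_num),
    steinOp_steinSolution ha g⟩
end

section
/- Let a, b > 0 and let μ_a, μ_b be the probability measures on ℕ with μ_c({n}) = (1/Z_c) · cⁿ/(n!)², Z_c = Σ_{k≥0} c^k/(k!)² for c ∈ {a, b}. Then for every function g : ℕ → ℝ with |g(m) − g(n)| ≤ |m − n| for all m, n, one has |Σ_{n≥0} g(n) μ_a({n}) − Σ_{n≥0} g(n) μ_b({n})| ≤ 9 |a − b|. In particular, the 1-Wasserstein distance between μ_a and μ_b is at most 9|a − b|. (With a = λ₁λ₂ and b = ν₁ν₂, this bounds the distance between the laws of a pair of independent Poisson(λ₁), Poisson(λ₂) variables conditioned on the diagonal of ℕ² and the analogous law with parameters ν₁, ν₂.) -/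
set_option maxHeartbeats 1000000


noncomputable def bwW (c : ℝ) (n : ℕ) : ℝ := c ^ n / (n.factorial : ℝ) ^ 2
noncomputable def bwZ (c : ℝ) : ℝ := ∑' k : ℕ, bwW c k

lemma bwW_nonneg {c : ℝ} (hc : 0 ≤ c) (n : ℕ) : 0 ≤ bwW c n := by
  unfold bwW; positivity

lemma summable_bwW {c : ℝ} (hc : 0 ≤ c) : Summable (bwW c) := by
  apply Summable.of_nonneg_of_le (bwW_nonneg hc) (fun n => ?_)
    (Real.summable_pow_div_factorial c)
  unfold bwW
  gcongr
  exact le_self_pow₀ (by exact_mod_cast n.factorial_pos) two_ne_zero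

lemma one_le_bwZ {c : ℝ} (hc : 0 ≤ c) : 1 ≤ bwZ c := by
  have h := Summable.le_tsum (summable_bwW hc) 0 (fun j _ => bwW_nonneg hc j)
  simpa [bwZ, bwW] using h

lemma bwZ_pos {c : ℝ} (hc : 0 ≤ c) : 0 < bwZ c := lt_of_lt_of_le one_pos (one_le_bwZ hc)

lemma shift_eq (c : ℝ) (n : ℕ) :
    ((n + 1 : ℕ) : ℝ) ^ 2 * bwW c (n + 1) = c * bwW c n := by
  unfold bwW
  rw [Nat.factorial_succ]
  have h0 : ((n.factorial : ℝ)) ≠ 0 := by exact_mod_cast n.factorial_pos.ne'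
  push_cast
  field_simp
  ring

lemma summable_nsq_bwW {c : ℝ} (hc : 0 ≤ c) :
    Summable (fun n : ℕ => ((n : ℕ) : ℝ) ^ 2 * bwW c n) := by
  apply (summable_nat_add_iff 1).mp
  have : (fun n : ℕ => ((n + 1 : ℕ) : ℝ) ^ 2 * bwW c (n + 1)) = fun n => c * bwW c n := by
    funext n; exact shift_eq c n
  rw [this]
  exact (summable_bwW hc).mul_left c

lemma tsum_nsq_bwW {c : ℝ} (hc : 0 ≤ c) :
    ∑' n : ℕ, ((n : ℕ) : ℝ) ^ 2 * bwW c n = c * bwZ c := by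
  rw [Summable.tsum_eq_zero_add (summable_nsq_bwW hc)]
  simp only [shift_eq c]
  rw [tsum_mul_left]
  simp [bwZ]

lemma summable_n_bwW {c : ℝ} (hc : 0 ≤ c) :
    Summable (fun n : ℕ => ((n : ℕ) : ℝ) * bwW c n) := by
  apply Summable.of_nonneg_of_le (fun n => mul_nonneg (Nat.cast_nonneg n) (bwW_nonneg hc n)) (fun n => ?_) (summable_nsq_bwW hc)
  have h1 : ((n : ℕ) : ℝ) ≤ ((n : ℕ) : ℝ) ^ 2 := by
    have : (n : ℝ) * 1 ≤ (n:ℝ) * (n:ℝ) := by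
      rcases Nat.eq_zero_or_pos n with h | h
      · simp [h]
      · have : (1:ℝ) ≤ n := by exact_mod_cast h
        nlinarith
    nlinarith
  exact mul_le_mul_of_nonneg_right h1 (bwW_nonneg hc n)

lemma pow_sub_pow_le' {a b : ℝ} (hb : 0 ≤ b) (hba : b ≤ a) :
    ∀ d : ℕ, a * (a ^ d - b ^ d) ≤ d * (a - b) * a ^ d := by
  intro d
  induction d with
  | zero => simp
  | succ d ih =>
    have ha : 0 ≤ a := hb.trans hba
    have hbd : b ^ d ≤ a ^ d := pow_le_pow_left₀ hb hba d
    have had : 0 ≤ a ^ d := pow_nonneg ha d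
    have h2 := mul_le_mul_of_nonneg_left ih ha
    rw [pow_succ, pow_succ]
    push_cast
    nlinarith [mul_nonneg (mul_nonneg ha had) (sub_nonneg.2 hba),
      mul_nonneg (mul_nonneg ha (sub_nonneg.2 hbd)) (sub_nonneg.2 hba)]

lemma key_ineq {a b : ℝ} (hb : 0 < b) (hba : b ≤ a) (n k : ℕ) :
    (n : ℝ) * |a ^ n * b ^ k - b ^ n * a ^ k| * a ≤
      (a - b) * ((n : ℝ) ^ 2 * a ^ n * b ^ k + (k : ℝ) ^ 2 * a ^ k * b ^ n) := by
  have ha : 0 < a := hb.trans_le hba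
  have hab : 0 ≤ a - b := sub_nonneg.2 hba
  rcases le_total k n with h | h
  · obtain ⟨d, rfl⟩ := Nat.exists_eq_add_of_le h
    have hbd : b ^ d ≤ a ^ d := pow_le_pow_left₀ hb.le hba d
    have h1 : |a ^ (k + d) * b ^ k - b ^ (k + d) * a ^ k|
        = a ^ k * b ^ k * (a ^ d - b ^ d) := by
      rw [abs_of_nonneg]
      · rw [pow_add, pow_add]; ring
      · rw [pow_add, pow_add]
        nlinarith [pow_pos hb k, pow_pos ha k, sub_nonneg.2 hbd,
          mul_nonneg (mul_nonneg (pow_pos ha k).le (pow_pos hb k).le) (sub_nonneg.2 hbd)]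
    rw [h1, pow_add, pow_add]
    have hP := pow_sub_pow_le' hb.le hba d
    have h2 : ((k + d : ℕ) : ℝ) * (a ^ k * b ^ k) * (a * (a ^ d - b ^ d)) ≤
        ((k + d : ℕ) : ℝ) * (a ^ k * b ^ k) * ((d : ℝ) * (a - b) * a ^ d) := by
      apply mul_le_mul_of_nonneg_left hP
      positivity
    push_cast at h2 ⊢
    have hA : (0:ℝ) ≤ (((k:ℝ)+d)*k) * ((a-b)*(a^k*(a^d*b^k))) :=
      mul_nonneg (by positivity) (mul_nonneg hab (by positivity))
    have hB : (0:ℝ) ≤ (a-b)*((k:ℝ)^2*(a^k*(b^k*b^d))) :=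
      mul_nonneg hab (by positivity)
    nlinarith [h2, hA, hB]
  · obtain ⟨d, rfl⟩ := Nat.exists_eq_add_of_le h
    have hbd : b ^ d ≤ a ^ d := pow_le_pow_left₀ hb.le hba d
    have h1 : |a ^ n * b ^ (n + d) - b ^ n * a ^ (n + d)|
        = a ^ n * b ^ n * (a ^ d - b ^ d) := by
      rw [abs_of_nonpos]
      · rw [pow_add, pow_add]; ring
      · rw [pow_add, pow_add]
        nlinarith [mul_nonneg (mul_nonneg (pow_nonneg ha.le n) (pow_nonneg hb.le n)) (sub_nonneg.2 hbd)]
    rw [h1, pow_add, pow_add]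
    have hP := pow_sub_pow_le' hb.le hba d
    have h2 : ((n : ℕ) : ℝ) * (a ^ n * b ^ n) * (a * (a ^ d - b ^ d)) ≤
        ((n : ℕ) : ℝ) * (a ^ n * b ^ n) * ((d : ℝ) * (a - b) * a ^ d) := by
      apply mul_le_mul_of_nonneg_left hP
      positivity
    push_cast at h2 ⊢
    have hA : (0:ℝ) ≤ ((n:ℝ)^2+(n:ℝ)*d+(d:ℝ)^2) * ((a-b)*(a^n*(a^d*b^n))) :=
      mul_nonneg (by positivity) (mul_nonneg hab (by positivity))
    have hB : (0:ℝ) ≤ (a-b)*((n:ℝ)^2*(a^n*(b^n*b^d))) :=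
      mul_nonneg hab (by positivity)
    nlinarith [h2, hA, hB]

lemma bwZ_def (c : ℝ) : bwZ c = ∑' k : ℕ, bwW c k := rfl

lemma besselWeight_eq (c : ℝ) (n : ℕ) : besselWeight c n = bwW c n / bwZ c := rfl

lemma besselWeight_nonneg {c : ℝ} (hc : 0 ≤ c) (n : ℕ) : 0 ≤ besselWeight c n :=
  div_nonneg (bwW_nonneg hc n) (bwZ_pos hc).le

lemma summable_bessel {c : ℝ} (hc : 0 ≤ c) : Summable (besselWeight c) :=
  (summable_bwW hc).div_const _

lemma tsum_bessel {c : ℝ} (hc : 0 ≤ c) : ∑' n : ℕ, besselWeight c n = 1 := by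
  simp only [besselWeight_eq]
  rw [tsum_div_const]
  exact div_self (bwZ_pos hc).ne'

lemma g_abs_bound (g : ℕ → ℝ) (n : ℕ)
    (hLip : ∀ m n : ℕ, |g m - g n| ≤ |(m : ℝ) - (n : ℝ)|) :
    |g n - g 0| ≤ (n : ℝ) := by
  have := hLip n 0
  simpa using this

lemma summable_g_mul (g : ℕ → ℝ) {c : ℝ} (hc : 0 < c)
    (hLip : ∀ m n : ℕ, |g m - g n| ≤ |(m : ℝ) - (n : ℝ)|) :
    Summable (fun n : ℕ => g n * besselWeight c n) := by
  rw [← summable_abs_iff]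
  apply Summable.of_nonneg_of_le (fun n => abs_nonneg _) ?_
    (((summable_bessel hc.le).mul_left |g 0|).add ((summable_n_bwW hc.le).div_const (bwZ c)))
  intro n
  have h1 : |g n| ≤ |g 0| + n := by
    have h3 := g_abs_bound g n hLip
    have h2 := abs_sub_abs_le_abs_sub (g n) (g 0)
    linarith
  have hp := besselWeight_nonneg hc.le n
  calc |g n * besselWeight c n| = |g n| * besselWeight c n := by
        rw [abs_mul, abs_of_nonneg hp]
    _ ≤ (|g 0| + n) * besselWeight c n := mul_le_mul_of_nonneg_right h1 hp
    _ = |g 0| * besselWeight c n + (n : ℝ) * bwW c n / bwZ c := by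
        rw [besselWeight_eq]; ring

lemma summable_h_mul (g : ℕ → ℝ) {c : ℝ} (hc : 0 < c)
    (hLip : ∀ m n : ℕ, |g m - g n| ≤ |(m : ℝ) - (n : ℝ)|) :
    Summable (fun n : ℕ => (g n - g 0) * besselWeight c n) := by
  rw [← summable_abs_iff]
  apply Summable.of_nonneg_of_le (fun n => abs_nonneg _) ?_
    ((summable_n_bwW hc.le).div_const (bwZ c))
  intro n
  have hp := besselWeight_nonneg hc.le n
  calc |(g n - g 0) * besselWeight c n| = |g n - g 0| * besselWeight c n := by
        rw [abs_mul, abs_of_nonneg hp]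
    _ ≤ (n : ℝ) * besselWeight c n :=
        mul_le_mul_of_nonneg_right (g_abs_bound g n hLip) hp
    _ = (n : ℝ) * bwW c n / bwZ c := by rw [besselWeight_eq]; ring

lemma expectation_shift (g : ℕ → ℝ) {c : ℝ} (hc : 0 < c)
    (hLip : ∀ m n : ℕ, |g m - g n| ≤ |(m : ℝ) - (n : ℝ)|) :
    ∑' n : ℕ, (g n - g 0) * besselWeight c n
      = (∑' n : ℕ, g n * besselWeight c n) - g 0 := by
  have h1 : ∀ n : ℕ, (g n - g 0) * besselWeight c n
      = g n * besselWeight c n - g 0 * besselWeight c n := fun n => by ring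
  rw [tsum_congr h1, Summable.tsum_sub (summable_g_mul g hc hLip)
    ((summable_bessel hc.le).mul_left (g 0)), tsum_mul_left, tsum_bessel hc.le, mul_one]

lemma bessel_bound_of_le {a b : ℝ} (hb : 0 < b) (hba : b ≤ a)
    (g : ℕ → ℝ) (hLip : ∀ m n : ℕ, |g m - g n| ≤ |(m : ℝ) - (n : ℝ)|) :
    |(∑' n : ℕ, g n * besselWeight a n) - ∑' n : ℕ, g n * besselWeight b n| ≤
      9 * (a - b) := by
  have ha : 0 < a := hb.trans_le hba
  have hZa := bwZ_pos ha.le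
  have hZb := bwZ_pos hb.le
  set X : ℕ → ℝ := fun n => ((n : ℝ) ^ 2 * bwW a n) * bwZ b + (a * bwZ a) * bwW b n with hX
  set C : ℝ := (a - b) / (a * (bwZ a * bwZ b)) with hC
  have hXsum : Summable X :=
    ((summable_nsq_bwW ha.le).mul_right (bwZ b)).add ((summable_bwW hb.le).mul_left (a * bwZ a))
  have hFsum : Summable (fun n => C * X n) := hXsum.mul_left C
  -- pointwise bound : n * |Δ n| ≤ C * X n
  have hpoint : ∀ n : ℕ, (n : ℝ) * |besselWeight a n - besselWeight b n| ≤ C * X n := by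
    intro n
    have hfn : ((n.factorial : ℝ)) ≠ 0 := by positivity
    set u : ℕ → ℝ := fun k => bwW a n * bwW b k - bwW b n * bwW a k with hu
    have husum : Summable u :=
      ((summable_bwW hb.le).mul_left (bwW a n)).sub ((summable_bwW ha.le).mul_left (bwW b n))
    have hD : bwW a n * bwZ b - bwW b n * bwZ a = ∑' k, u k := by
      rw [bwZ_def, bwZ_def, hu, Summable.tsum_sub ((summable_bwW hb.le).mul_left (bwW a n))
        ((summable_bwW ha.le).mul_left (bwW b n)), tsum_mul_left, tsum_mul_left, ← bwZ_def, ← bwZ_def]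
    set Y : ℕ → ℝ := fun k => ((a - b) / a) *
        (((n:ℝ)^2 * bwW a n) * bwW b k + ((k:ℝ)^2 * bwW a k) * bwW b n) with hY
    have hYsum1 : Summable (fun k => ((n:ℝ)^2 * bwW a n) * bwW b k) :=
      (summable_bwW hb.le).mul_left _
    have hYsum2 : Summable (fun k : ℕ => ((k:ℝ)^2 * bwW a k) * bwW b n) :=
      (summable_nsq_bwW ha.le).mul_right _
    have hYsum : Summable Y := (hYsum1.add hYsum2).mul_left _
    have hkey : ∀ k : ℕ, |(n : ℝ) * u k| ≤ Y k := by
      intro k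
      have hfk : ((k.factorial : ℝ)) ≠ 0 := by positivity
      have hden : (0:ℝ) < (n.factorial:ℝ)^2 * (k.factorial:ℝ)^2 := by positivity
      have hueq : u k = (a ^ n * b ^ k - b ^ n * a ^ k) /
          ((n.factorial : ℝ)^2 * (k.factorial : ℝ)^2) := by
        simp only [hu, bwW]; field_simp
      have e1 : |(n:ℝ) * u k| = ((n:ℝ) * |a ^ n * b ^ k - b ^ n * a ^ k| * a) /
          (a * ((n.factorial:ℝ)^2 * (k.factorial:ℝ)^2)) := by
        rw [hueq, abs_mul, abs_div, abs_of_pos hden, abs_of_nonneg (Nat.cast_nonneg n)]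
        field_simp
      have e2 : Y k = ((a - b) * ((n:ℝ)^2 * a^n * b^k + (k:ℝ)^2 * a^k * b^n)) /
          (a * ((n.factorial:ℝ)^2 * (k.factorial:ℝ)^2)) := by
        simp only [hY, bwW]; field_simp
      rw [e1, e2]
      exact div_le_div_of_nonneg_right (key_ineq hb hba n k) (by positivity)
    have habs_sum : Summable (fun k => |(n:ℝ) * u k|) :=
      Summable.of_nonneg_of_le (fun k => abs_nonneg _) hkey hYsum
    have hnD : (n:ℝ) * |bwW a n * bwZ b - bwW b n * bwZ a| ≤
        ((a-b)/a) * (((n:ℝ)^2 * bwW a n) * bwZ b + (a * bwZ a) * bwW b n) := by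
      rw [hD]
      calc (n:ℝ) * |∑' k, u k| = |∑' k, (n:ℝ) * u k| := by
            rw [tsum_mul_left, abs_mul, Nat.abs_cast]
        _ ≤ ∑' k, |(n:ℝ) * u k| := by
            have h5 := norm_tsum_le_tsum_norm (f := fun k => (n:ℝ) * u k)
              (by simp only [Real.norm_eq_abs]; exact habs_sum)
            simp only [Real.norm_eq_abs] at h5
            exact h5
        _ ≤ ∑' k, Y k := Summable.tsum_le_tsum hkey habs_sum hYsum
        _ = ((a-b)/a) * (((n:ℝ)^2 * bwW a n) * bwZ b + (a * bwZ a) * bwW b n) := by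
            rw [hY, tsum_mul_left, Summable.tsum_add hYsum1 hYsum2, tsum_mul_left, tsum_mul_right,
              tsum_nsq_bwW ha.le, ← bwZ_def]
    have hΔ : besselWeight a n - besselWeight b n =
        (bwW a n * bwZ b - bwW b n * bwZ a) / (bwZ a * bwZ b) := by
      rw [besselWeight_eq, besselWeight_eq, div_sub_div _ _ hZa.ne' hZb.ne']
      ring_nf
    calc (n : ℝ) * |besselWeight a n - besselWeight b n|
        = ((n:ℝ) * |bwW a n * bwZ b - bwW b n * bwZ a|) / (bwZ a * bwZ b) := by
          rw [hΔ, abs_div, abs_of_pos (by positivity : (0:ℝ) < bwZ a * bwZ b)]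
          ring
      _ ≤ (((a-b)/a) * (((n:ℝ)^2 * bwW a n) * bwZ b + (a * bwZ a) * bwW b n)) / (bwZ a * bwZ b) :=
          div_le_div_of_nonneg_right hnD (by positivity)
      _ = C * X n := by
          rw [hC, hX]
          field_simp
  -- summability of |h n * Δ n|
  have hhd : ∀ n : ℕ, |(g n - g 0) * (besselWeight a n - besselWeight b n)| ≤ C * X n := by
    intro n
    calc |(g n - g 0) * (besselWeight a n - besselWeight b n)|
        = |g n - g 0| * |besselWeight a n - besselWeight b n| := abs_mul _ _
      _ ≤ (n : ℝ) * |besselWeight a n - besselWeight b n| :=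
          mul_le_mul_of_nonneg_right (g_abs_bound g n hLip) (abs_nonneg _)
      _ ≤ C * X n := hpoint n
  have habssum : Summable (fun n => |(g n - g 0) * (besselWeight a n - besselWeight b n)|) :=
    Summable.of_nonneg_of_le (fun n => abs_nonneg _) hhd hFsum
  -- rewrite the difference of expectations
  have hdiff : (∑' n : ℕ, g n * besselWeight a n) - ∑' n : ℕ, g n * besselWeight b n
      = ∑' n : ℕ, (g n - g 0) * (besselWeight a n - besselWeight b n) := by
    have h1 : ∑' n : ℕ, (g n - g 0) * (besselWeight a n - besselWeight b n)
        = (∑' n : ℕ, (g n - g 0) * besselWeight a n)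
          - ∑' n : ℕ, (g n - g 0) * besselWeight b n := by
      rw [← Summable.tsum_sub (summable_h_mul g ha hLip) (summable_h_mul g hb hLip)]
      congr 1; funext n; ring
    rw [h1, expectation_shift g ha hLip, expectation_shift g hb hLip]
    ring
  -- total sum
  have htot : ∑' n : ℕ, C * X n = 2 * (a - b) := by
    rw [tsum_mul_left, hX, Summable.tsum_add ((summable_nsq_bwW ha.le).mul_right (bwZ b))
      ((summable_bwW hb.le).mul_left (a * bwZ a)), tsum_mul_right, tsum_mul_left,
      tsum_nsq_bwW ha.le]
    have : (∑' (n : ℕ), bwW b n) = bwZ b := rfl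
    rw [this, hC]
    field_simp
    ring
  rw [hdiff]
  calc |∑' n : ℕ, (g n - g 0) * (besselWeight a n - besselWeight b n)|
      ≤ ∑' n : ℕ, |(g n - g 0) * (besselWeight a n - besselWeight b n)| := by
        have h5 := norm_tsum_le_tsum_norm
          (f := fun n : ℕ => (g n - g 0) * (besselWeight a n - besselWeight b n))
          (by simp only [Real.norm_eq_abs]; exact habssum)
        simp only [Real.norm_eq_abs] at h5
        exact h5
    _ ≤ ∑' n : ℕ, C * X n := Summable.tsum_le_tsum hhd habssum hFsum
    _ = 2 * (a - b) := htot
    _ ≤ 9 * (a - b) := by nlinarith [sub_nonneg.2 hba]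

/-- **Wasserstein bound for Poisson measures conditioned on the diagonal.**
For `a, b > 0` and every `1`-Lipschitz `g : ℕ → ℝ`,
`|∑_n g(n) μ_a({n}) − ∑_n g(n) μ_b({n})| ≤ 9 |a − b|`; in particular
`d_{W,1}(μ_a, μ_b) ≤ 9|a−b|`. -/
theorem besselWeight_wasserstein_bound (a b : ℝ) (ha : 0 < a) (hb : 0 < b)
    (g : ℕ → ℝ) (hLip : ∀ m n : ℕ, |g m - g n| ≤ |(m : ℝ) - (n : ℝ)|) :
    |(∑' n : ℕ, g n * besselWeight a n) - ∑' n : ℕ, g n * besselWeight b n| ≤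
      9 * |a - b| := by
  rcases le_total b a with h | h
  · rw [abs_of_nonneg (sub_nonneg.2 h)]
    exact bessel_bound_of_le hb h g hLip
  · rw [abs_sub_comm (∑' n : ℕ, g n * besselWeight a n), abs_sub_comm a b,
      abs_of_nonneg (sub_nonneg.2 h)]
    exact bessel_bound_of_le ha h g hLip
end

section
/- Let γ ∈ [1/2, 1), K ≥ 0, M ≥ 0, and let b : ℝ → ℝ be twice differentiable with |b′(x)| ≤ K(1+|x|)^{−γ} and |b″(x)| ≤ M for all x ∈ ℝ. Then for all x ∈ ℝ, |b(x)·b′(x) + b″(x)/2| ≤ K · max(|b(0)| − K/(1−γ), 0) + K²/(1−γ) + M/2. -/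
open Real

/-!
Comparing `b` with a primitive of `K (1 + |t|)^{-γ}` gives the growth bound
`|b x| ≤ |b 0| + c ((1 + |x|)^{1-γ} - 1)` with `c = K / (1 - γ)`. Multiplying by `|b' x| ≤ K P`,
`P = (1 + |x|)^{-γ}`, gives `K P (|b 0| - c) + K c P (1 + |x|)^{1-γ}`. The first term is at most
`K max(|b 0| - c, 0)` because `P ≤ 1`, and the second at most `K c` because
`P (1 + |x|)^{1-γ} = (1 + |x|)^{1-2γ} ≤ 1` for `γ ≥ 1/2`.
-/

theorem abs_sub_le_of_abs_deriv_le_rpow_of_nonneg {f : ℝ → ℝ} {K γ y : ℝ} (hγ : γ < 1)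
    (hf : Differentiable ℝ f) (hbd : ∀ x, 0 ≤ x → |deriv f x| ≤ K * (1 + x) ^ (-γ))
    (hy : 0 ≤ y) :
    |f y - f 0| ≤ K / (1 - γ) * ((1 + y) ^ (1 - γ) - 1) := by
  have hγ' : 1 - γ ≠ 0 := by linarith
  have hB : ∀ t, 0 ≤ t →
      HasDerivAt (fun t => K / (1 - γ) * ((1 + t) ^ (1 - γ) - 1)) (K * (1 + t) ^ (-γ)) t := by
    intro t ht
    have h := ((((hasDerivAt_id t).const_add 1).rpow_const (p := 1 - γ)
      (Or.inl (by simp; linarith))).sub_const 1).const_mul (K / (1 - γ))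
    refine h.congr_deriv ?_
    rw [show 1 - γ - 1 = -γ by ring]
    field_simp
    simp
  refine image_norm_le_of_norm_deriv_right_le_deriv_boundary' (f := fun t => f t - f 0)
    (f' := deriv f) (a := 0) (b := y) ((hf.sub_const _).continuous.continuousOn)
    (fun t _ => ((hf t).hasDerivAt.sub_const _).hasDerivWithinAt) (by simp)
    (fun t ht => (hB t ht.1).continuousAt.continuousWithinAt)
    (fun t ht => (hB t ht.1).hasDerivWithinAt) (fun t ht => hbd t ht.1) ⟨hy, le_rfl⟩

theorem abs_sub_le_of_abs_deriv_le_rpow {f : ℝ → ℝ} {K γ : ℝ} (hγ : γ < 1)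
    (hf : Differentiable ℝ f) (hbd : ∀ x, |deriv f x| ≤ K * (1 + |x|) ^ (-γ)) (y : ℝ) :
    |f y - f 0| ≤ K / (1 - γ) * ((1 + |y|) ^ (1 - γ) - 1) := by
  rcases le_total 0 y with hy | hy
  · rw [abs_of_nonneg hy]
    exact abs_sub_le_of_abs_deriv_le_rpow_of_nonneg hγ hf
      (fun x hx => by simpa [abs_of_nonneg hx] using hbd x) hy
  · have h := abs_sub_le_of_abs_deriv_le_rpow_of_nonneg (f := fun x => f (-x)) (y := -y) hγ
      (hf.comp differentiable_neg) (fun x hx => by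
        simpa [deriv_comp_neg, abs_of_nonneg hx] using hbd (-x)) (neg_nonneg.2 hy)
    simpa [abs_of_nonpos hy] using h

theorem rpow_neg_mul_rpow_one_sub_le_one {t γ : ℝ} (ht : 1 ≤ t) (hγ : 1 / 2 ≤ γ) :
    t ^ (-γ) * t ^ (1 - γ) ≤ 1 := by
  rw [← rpow_add (by linarith)]
  exact rpow_le_one_of_one_le_of_nonpos ht (by linarith)

theorem mul_le_max_zero {p a : ℝ} (hp₀ : 0 ≤ p) (hp₁ : p ≤ 1) : p * a ≤ max a 0 :=
  (mul_le_mul_of_nonneg_left (le_max_left a 0) hp₀).trans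
    (mul_le_of_le_one_left (le_max_right a 0) hp₁)

theorem beta_deriv_improved_bound_general (γ K M : ℝ) (hγ₀ : 1 / 2 ≤ γ) (hγ₁ : γ < 1)
    (hK : 0 ≤ K)
    (b : ℝ → ℝ) (hb : Differentiable ℝ b)
    (hbd : ∀ x : ℝ, |deriv b x| ≤ K * (1 + |x|) ^ (-γ))
    (hbd2 : ∀ x : ℝ, |deriv (deriv b) x| ≤ M) :
    ∀ x : ℝ, |b x * deriv b x + deriv (deriv b) x / 2| ≤
      K * max (|b 0| - K / (1 - γ)) 0 + K ^ 2 / (1 - γ) + M / 2 := by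
  intro x
  set c := K / (1 - γ)
  set P := (1 + |x|) ^ (-γ)
  set Q := (1 + |x|) ^ (1 - γ)
  have hx : 1 ≤ 1 + |x| := le_add_of_nonneg_right (abs_nonneg x)
  have hc : 0 ≤ c := div_nonneg hK (by linarith)
  have hP₀ : 0 ≤ P := rpow_nonneg (by linarith) _
  have hP₁ : P ≤ 1 := rpow_le_one_of_one_le_of_nonpos hx (by linarith)
  have hQ : 1 ≤ Q := one_le_rpow hx (by linarith)
  have hPQ : P * Q ≤ 1 := rpow_neg_mul_rpow_one_sub_le_one hx hγ₀
  have hbx : |b x| ≤ |b 0| + c * (Q - 1) := by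
    linarith [abs_sub_le_of_abs_deriv_le_rpow hγ₁ hb hbd x, abs_sub_abs_le_abs_sub (b x) (b 0)]
  have hb''x : |deriv (deriv b) x / 2| ≤ M / 2 := by
    rw [abs_div, abs_two]; linarith [hbd2 x]
  calc |b x * deriv b x + deriv (deriv b) x / 2|
      ≤ |b x| * |deriv b x| + M / 2 := by
        grw [abs_add_le, abs_mul, hb''x]
    _ ≤ (|b 0| + c * (Q - 1)) * (K * P) + M / 2 := by
        gcongr
        exact hbd x
    _ = K * (P * (|b 0| - c)) + K * c * (P * Q) + M / 2 := by ring
    _ ≤ K * max (|b 0| - c) 0 + K * c * 1 + M / 2 := by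
        gcongr
        exact mul_le_max_zero hP₀ hP₁
    _ = K * max (|b 0| - c) 0 + K ^ 2 / (1 - γ) + M / 2 := by ring

/-- Improved bound: if `γ ∈ [1/2, 1)` and `b` is twice differentiable with
`|b′(x)| ≤ K(1+|x|)^{−γ}` and `|b″(x)| ≤ M`, then
`|b(x)b′(x) + b″(x)/2| ≤ K·max(|b(0)| − K/(1−γ), 0) + K²/(1−γ) + M/2`. -/
theorem beta_deriv_improved_bound (γ K M : ℝ) (hγ₀ : 1 / 2 ≤ γ) (hγ₁ : γ < 1)
    (hK : 0 ≤ K) (hM : 0 ≤ M)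
    (b : ℝ → ℝ) (hb : Differentiable ℝ b) (hb' : Differentiable ℝ (deriv b))
    (hbd : ∀ x : ℝ, |deriv b x| ≤ K * (1 + |x|) ^ (-γ))
    (hbd2 : ∀ x : ℝ, |deriv (deriv b) x| ≤ M) :
    ∀ x : ℝ, |b x * deriv b x + deriv (deriv b) x / 2| ≤
      K * max (|b 0| - K / (1 - γ)) 0 + K ^ 2 / (1 - γ) + M / 2 :=
  beta_deriv_improved_bound_general γ K M hγ₀ hγ₁ hK b hb hbd hbd2
end

section
/- Let n ∈ ℕ, let ε : Fin (2n) → ℤ take values in {1, −1} with Σ_{k<2n} ε(k) = 0, and let S(k) = Σ_{i<k} ε(i) denote the partial sums (with S(0) = 0). Let a, b : ℤ → ℝ be strictly positive functions and 0 < ν ≤ μ real numbers such that ν ≤ a(j)·b(j+1) ≤ μ for all j ∈ ℤ. Then νⁿ ≤ (∏_{k<2n, ε(k)=1} a(S(k))) · (∏_{k<2n, ε(k)=−1} b(S(k))) ≤ μⁿ. -/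
/-!
Give the heights the potential `Φ h = ∏_{j=1}^{h} b j` (with `∏_{j=1}^{h} = (∏_{j=h+1}^{0})⁻¹`
for `h < 0`). A down-step from `h` has weight `b h = Φ h / Φ (h - 1)`, and an up-step from `h` has
weight `a h = a h b (h + 1) · Φ h / Φ (h + 1)`. Along a bridge the potential factors telescope, so
the product of the weights is the product of the reciprocal characteristics `a (S k) b (S k + 1)`
over the up-steps. A bridge of length `2n` has exactly `n` up-steps, and each of these factors lies
in `[ν, μ]`.
-/

open Finset

namespace Fin

variable {M : Type*} {n : ℕ}

theorem partialSum_eq_sum_filter_castSucc_lt [AddCommMonoid M] (f : Fin n → M)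
    (i : Fin (n + 1)) : partialSum f i = ∑ j with j.castSucc < i, f j := by
  induction i using Fin.induction with
  | zero => simp
  | succ i ih =>
    simp only [partialSum_succ, ih, castSucc_lt_succ_iff, castSucc_lt_castSucc_iff,
      filter_gt_eq_Iio, filter_ge_eq_Iic]
    exact sum_Iio_add_eq_sum_Iic i

theorem prod_eq_prod_of_mul_succ_eq_mul_castSucc [CommMonoidWithZero M] [IsCancelMulZero M]
    {f g : Fin n → M} (Φ : Fin (n + 1) → M) (hΦ : ∀ i, Φ i ≠ 0) (hclosed : Φ 0 = Φ (last n))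
    (hstep : ∀ k, f k * Φ k.succ = g k * Φ k.castSucc) : ∏ k, f k = ∏ k, g k := by
  have : Nontrivial M := nontrivial_of_ne _ _ (hΦ 0)
  have hshift : ∏ k : Fin n, Φ k.succ = ∏ k : Fin n, Φ k.castSucc :=
    mul_left_cancel₀ (hΦ 0) <| by rw [← prod_univ_succ, prod_univ_castSucc, hclosed, mul_comm]
  refine mul_right_cancel₀ (prod_ne_zero_iff.2 fun k (_ : k ∈ univ) => hΦ (castSucc k)) ?_
  calc (∏ k, f k) * ∏ k : Fin n, Φ k.castSucc = ∏ k : Fin n, f k * Φ k.succ := by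
        rw [← hshift, prod_mul_distrib]
    _ = (∏ k, g k) * ∏ k : Fin n, Φ k.castSucc := by simp only [hstep, prod_mul_distrib]

end Fin

theorem two_mul_card_filter_eq_one_of_sum_eq_zero {ι : Type*} [Fintype ι] {ε : ι → ℤ}
    (hval : ∀ i, ε i = 1 ∨ ε i = -1) (hsum : ∑ i, ε i = 0) :
    2 * #{i | ε i = 1} = Fintype.card ι := by
  have hup : ∀ i ∈ ({i | ε i = 1} : Finset ι), ε i = 1 := fun i hi => (mem_filter.1 hi).2
  have hdown : ∀ i ∈ ({i | ¬ ε i = 1} : Finset ι), ε i = -1 := fun i hi =>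
    (hval i).resolve_left (mem_filter.1 hi).2
  have hcard := card_filter_add_card_filter_not (s := univ) fun i => ε i = 1
  rw [← sum_filter_add_sum_filter_not univ (fun i => ε i = 1), sum_congr rfl hup,
    sum_congr rfl hdown] at hsum
  simp only [sum_const, Int.nsmul_eq_mul, mul_one, mul_neg] at hsum
  rw [card_univ] at hcard
  omega

section

variable {K : Type*}

noncomputable def signedProdIoc [CommGroupWithZero K] (b : ℤ → K) (h : ℤ) : K :=
  (∏ j ∈ Ioc 0 h, b j) / ∏ j ∈ Ioc h 0, b j

def bridgeWeight [CommMonoid K] (a b : ℤ → K) {m : ℕ} (ε : Fin m → ℤ) : K :=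
  ∏ k, if ε k = 1 then a (Fin.partialSum ε k.castSucc) else b (Fin.partialSum ε k.castSucc)

variable [CommGroupWithZero K] {a b : ℤ → K}

theorem signedProdIoc_add_one {h : ℤ} (hb : b (h + 1) ≠ 0) :
    signedProdIoc b (h + 1) = signedProdIoc b h * b (h + 1) := by
  unfold signedProdIoc
  rcases le_or_gt 0 h with h0 | h0
  · rw [← insert_Ioc_right_eq_Ioc_add_one h0, prod_insert (by simp),
      Ioc_eq_empty (by omega : ¬ h + 1 < 0), Ioc_eq_empty (by omega : ¬ h < 0)]
    simp [mul_comm]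
  · rw [← insert_Ioc_add_one_left_eq_Ioc h0, prod_insert left_notMem_Ioc,
      Ioc_eq_empty (by omega : ¬ (0 : ℤ) < h + 1), Ioc_eq_empty (by omega : ¬ (0 : ℤ) < h)]
    field_simp

theorem signedProdIoc_ne_zero (hb : ∀ j, b j ≠ 0) (h : ℤ) : signedProdIoc b h ≠ 0 :=
  div_ne_zero (prod_ne_zero_iff.2 fun j _ => hb j) (prod_ne_zero_iff.2 fun j _ => hb j)

theorem ite_mul_signedProdIoc_add (hb : ∀ j, b j ≠ 0) {e : ℤ} (he : e = 1 ∨ e = -1) (h : ℤ) :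
    (if e = 1 then a h else b h) * signedProdIoc b (h + e) =
      (if e = 1 then a h * b (h + 1) else 1) * signedProdIoc b h := by
  rcases he with rfl | rfl
  · simp only [if_pos, signedProdIoc_add_one (hb _)]
    ac_rfl
  · have hh : h = h + -1 + 1 := by ring
    conv_rhs => rw [hh, signedProdIoc_add_one (hb _), ← hh]
    simp only [if_neg (by decide : (-1 : ℤ) ≠ 1)]
    rw [one_mul, mul_comm]

theorem bridgeWeight_eq_prod_filter (hb : ∀ j, b j ≠ 0) {m : ℕ} {ε : Fin m → ℤ}
    (hval : ∀ k, ε k = 1 ∨ ε k = -1) (hsum : ∑ k, ε k = 0) :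
    bridgeWeight a b ε = ∏ k with ε k = 1,
      a (Fin.partialSum ε k.castSucc) * b (Fin.partialSum ε k.castSucc + 1) := by
  rw [bridgeWeight, prod_filter]
  refine Fin.prod_eq_prod_of_mul_succ_eq_mul_castSucc
    (fun i => signedProdIoc b (Fin.partialSum ε i)) (fun i => signedProdIoc_ne_zero hb _) ?_
    fun k => ?_
  · simp [Fin.partialSum_eq_sum_filter_castSucc_lt, Fin.castSucc_lt_last, hsum]
  · simp only [Fin.partialSum_succ]
    exact ite_mul_signedProdIoc_add hb (hval k) _

end

theorem bridge_rate_product_bound_general (n : ℕ) (ε : Fin (2 * n) → ℤ)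
    (hval : ∀ k, ε k = 1 ∨ ε k = -1) (hsum : ∑ k, ε k = 0)
    (S : Fin (2 * n) → ℤ) (hS : ∀ k, S k = ∑ i ∈ univ.filter (fun i => i < k), ε i)
    (a b : ℤ → ℝ) (hb : ∀ j, 0 < b j)
    (ν μ : ℝ) (hν : 0 < ν)
    (hlow : ∀ j : ℤ, ν ≤ a j * b (j + 1)) (hhigh : ∀ j : ℤ, a j * b (j + 1) ≤ μ) :
    ν ^ n ≤ (∏ k ∈ univ.filter (fun k => ε k = 1), a (S k)) *
        ∏ k ∈ univ.filter (fun k => ε k = -1), b (S k) ∧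
      (∏ k ∈ univ.filter (fun k => ε k = 1), a (S k)) *
        ∏ k ∈ univ.filter (fun k => ε k = -1), b (S k) ≤ μ ^ n := by
  have hS' : ∀ k, S k = Fin.partialSum ε k.castSucc := fun k => by
    rw [hS, Fin.partialSum_eq_sum_filter_castSucc_lt]
    simp only [Fin.castSucc_lt_castSucc_iff]
  have hdown : univ.filter (fun k => ε k = -1) = univ.filter (fun k => ¬ ε k = 1) :=
    filter_congr fun k _ => by rcases hval k with h | h <;> simp [h]
  have hcard : #{k | ε k = 1} = n := by
    have := two_mul_card_filter_eq_one_of_sum_eq_zero hval hsum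
    rw [Fintype.card_fin] at this
    omega
  have hweight := bridgeWeight_eq_prod_filter (a := a) (fun j => (hb j).ne') hval hsum
  rw [bridgeWeight, prod_ite] at hweight
  simp only [hS', hdown, hweight]
  constructor
  · calc ν ^ n = ∏ _k ∈ univ.filter (fun k => ε k = 1), ν := by rw [prod_const, hcard]
      _ ≤ _ := prod_le_prod (fun _ _ => hν.le) fun _ _ => hlow _
  · calc _ ≤ ∏ _k ∈ univ.filter (fun k => ε k = 1), μ :=
          prod_le_prod (fun _ _ => hν.le.trans (hlow _)) fun _ _ => hhigh _
      _ = μ ^ n := by rw [prod_const, hcard]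

/-- **Reciprocal-characteristics product bound for bridges.**
Let `ε : Fin (2n) → ℤ` take values in `{1, −1}` with total sum `0`, and let
`S k = ∑_{i<k} ε i` be the partial sums.  If `0 < ν ≤ μ` and the positive jump
rates `a, b : ℤ → ℝ` satisfy `ν ≤ a(j) b(j+1) ≤ μ` for all `j`, then
`νⁿ ≤ (∏_{ε k = 1} a(S k)) (∏_{ε k = −1} b(S k)) ≤ μⁿ`. -/
theorem bridge_rate_product_bound (n : ℕ) (ε : Fin (2 * n) → ℤ)
    (hval : ∀ k, ε k = 1 ∨ ε k = -1) (hsum : ∑ k, ε k = 0)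
    (S : Fin (2 * n) → ℤ) (hS : ∀ k, S k = ∑ i ∈ univ.filter (fun i => i < k), ε i)
    (a b : ℤ → ℝ) (ha : ∀ j, 0 < a j) (hb : ∀ j, 0 < b j)
    (ν μ : ℝ) (hν : 0 < ν) (hνμ : ν ≤ μ)
    (hlow : ∀ j : ℤ, ν ≤ a j * b (j + 1)) (hhigh : ∀ j : ℤ, a j * b (j + 1) ≤ μ) :
    ν ^ n ≤ (∏ k ∈ univ.filter (fun k => ε k = 1), a (S k)) *
        ∏ k ∈ univ.filter (fun k => ε k = -1), b (S k) ∧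
      (∏ k ∈ univ.filter (fun k => ε k = 1), a (S k)) *
        ∏ k ∈ univ.filter (fun k => ε k = -1), b (S k) ≤ μ ^ n :=
  bridge_rate_product_bound_general n ε hval hsum S hS a b hb ν μ hν hlow hhigh
end

section
/- Let N ∈ ℕ with N ≥ 3, and let ξ₁, …, ξ_N be independent identically distributed random variables with values in {−1, 0, 1}, each with P(ξ_j = 1) = P(ξ_j = −1) = 1/N and P(ξ_j = 0) = 1 − 2/N. Let S⁺ = #{j : ξ_j = 1} and S⁻ = #{j : ξ_j = −1}. Then P(S⁺ = S⁻) > 0, E[(S⁺)² | S⁺ = S⁻] ≤ (1 − 2/N)^{−2}, and E[S⁺ | S⁺ = S⁻] ≤ (1 − 2/N)^{−1}. -/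
/-!
Write `q = 1 - 2/N` and weight a configuration `ω ∈ {-1, 0, 1}^N` by `w ω = ∏ i, P(ξ = ω i)`.
Replacing a `+1` at `i` and a `-1` at `j` by zeros is a bijection from triples `(ω, i, j)` with
`ω` balanced, `ω i = 1`, `ω j = -1` onto triples `(ω', i, j)` with `ω'` balanced and `i ≠ j` zeros
of `ω'`, and it multiplies the weight by `(qN)²`. A balanced `ω` with `k` up-jumps has `k²` such
pairs `(i, j)`, while `ω'` has fewer than `N²` pairs of zeros, so `q² E[k²; S⁺ = S⁻] ≤ P(S⁺ = S⁻)`.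
The first-moment bound follows from the second by Cauchy–Schwarz.
-/

open MeasureTheory ProbabilityTheory Finset Function
open scoped ENNReal

section Configurations

variable {ι α : Type*}

lemma update_update_restore [DecidableEq ι] (ω : ι → α) {i j : ι} (hij : i ≠ j) (b b' : α) :
    update (update (update (update ω i b) j b') i (ω i)) j (ω j) = ω := by
  ext m
  rcases eq_or_ne m j with rfl | hmj
  · simp
  rcases eq_or_ne m i with rfl | hmi
  · simp [hmj]
  simp [hmi, hmj]

variable [Fintype ι]

def levelSet [DecidableEq α] (ω : ι → α) (a : α) : Finset ι := {j | ω j = a}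

@[simp]
lemma mem_levelSet [DecidableEq α] {ω : ι → α} {a : α} {j : ι} : j ∈ levelSet ω a ↔ ω j = a := by
  simp [levelSet]

variable [DecidableEq ι]

@[to_additive]
lemma prod_comp_update_mul {M : Type*} [CommMonoid M] (g : α → M) (ω : ι → α) (i : ι) (b : α) :
    (∏ j, g (update ω i b j)) * g (ω i) = (∏ j, g (ω j)) * g b := by
  rw [← mul_prod_erase univ _ (mem_univ i), ← mul_prod_erase univ (fun j => g (ω j)) (mem_univ i),
    prod_congr rfl fun j hj => by rw [update_of_ne (ne_of_mem_erase hj)], update_self]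
  ac_rfl

lemma mul_mul_prod_comp_update_update {M : Type*} [CommMonoid M] (g : α → M) (ω : ι → α)
    {i j : ι} (hij : i ≠ j) (b b' : α) :
    g (ω i) * g (ω j) * ∏ k, g (update (update ω i b) j b' k) = g b * g b' * ∏ k, g (ω k) := by
  have h₁ := prod_comp_update_mul g ω i b
  have h₂ := prod_comp_update_mul g (update ω i b) j b'
  rw [update_of_ne hij.symm] at h₂
  calc _ = g (ω i) * ((∏ k, g (update (update ω i b) j b' k)) * g (ω j)) := by ac_rfl
    _ = g b' * ((∏ k, g (update ω i b k)) * g (ω i)) := by rw [h₂]; ac_rfl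
    _ = _ := by rw [h₁]; ac_rfl

lemma card_levelSet_update_add [DecidableEq α] (ω : ι → α) (i : ι) (b a : α) :
    #(levelSet (update ω i b) a) + (if ω i = a then 1 else 0) =
      #(levelSet ω a) + (if b = a then 1 else 0) := by
  simpa only [levelSet, card_filter] using
    sum_comp_update_add (fun x => if x = a then 1 else 0) ω i b

def trinaryConfigs (ι : Type*) [Fintype ι] [DecidableEq ι] : Finset (ι → ℤ) :=
  Fintype.piFinset fun _ => {1, -1, 0}

def balancedConfigs (ι : Type*) [Fintype ι] [DecidableEq ι] : Finset (ι → ℤ) :=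
  {ω ∈ trinaryConfigs ι | #(levelSet ω 1) = #(levelSet ω (-1))}

lemma update_mem_trinaryConfigs {ω : ι → ℤ} (hω : ω ∈ trinaryConfigs ι) (i : ι) {b : ℤ}
    (hb : b ∈ ({1, -1, 0} : Finset ℤ)) : update ω i b ∈ trinaryConfigs ι := by
  simp only [trinaryConfigs, Fintype.mem_piFinset] at hω ⊢
  intro j
  rcases eq_or_ne j i with rfl | hj
  · simpa using hb
  · simpa [hj] using hω j

lemma card_levelSet_update_update_add [DecidableEq α] (ω : ι → α) {i j : ι} (hij : i ≠ j)
    (b b' a : α) :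
    #(levelSet (update (update ω i b) j b') a) + (if ω i = a then 1 else 0) +
        (if ω j = a then 1 else 0) =
      #(levelSet ω a) + (if b = a then 1 else 0) + (if b' = a then 1 else 0) := by
  have h₁ := card_levelSet_update_add ω i b a
  have h₂ := card_levelSet_update_add (update ω i b) j b' a
  rw [update_of_ne hij.symm] at h₂
  omega

lemma update_update_zero_mem_balancedConfigs {ω : ι → ℤ} (hω : ω ∈ balancedConfigs ι) {i j : ι}
    (hi : ω i = 1) (hj : ω j = -1) : update (update ω i 0) j 0 ∈ balancedConfigs ι := by
  have hij : i ≠ j := by rintro rfl; omega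
  simp only [balancedConfigs, mem_filter] at hω ⊢
  refine ⟨update_mem_trinaryConfigs (update_mem_trinaryConfigs hω.1 _ (by simp)) _ (by simp), ?_⟩
  have h₁ := card_levelSet_update_update_add ω hij 0 0 1
  have h₂ := card_levelSet_update_update_add ω hij 0 0 (-1)
  simp only [hi, hj] at h₁ h₂
  norm_num at h₁ h₂
  omega

lemma update_update_one_neg_one_mem_balancedConfigs {ω : ι → ℤ} (hω : ω ∈ balancedConfigs ι)
    {i j : ι} (hi : ω i = 0) (hj : ω j = 0) (hij : i ≠ j) :
    update (update ω i 1) j (-1) ∈ balancedConfigs ι := by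
  simp only [balancedConfigs, mem_filter] at hω ⊢
  refine ⟨update_mem_trinaryConfigs (update_mem_trinaryConfigs hω.1 _ (by simp)) _ (by simp), ?_⟩
  have h₁ := card_levelSet_update_update_add ω hij 1 (-1) 1
  have h₂ := card_levelSet_update_update_add ω hij 1 (-1) (-1)
  simp only [hi, hj] at h₁ h₂
  norm_num at h₁ h₂
  omega

theorem sum_sigma_product_levelSet_eq_sum_sigma_offDiag {R : Type*} [CommSemiring R]
    (c : ℤ → R) :
    ∑ x ∈ (balancedConfigs ι).sigma fun ω => levelSet ω 1 ×ˢ levelSet ω (-1),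
        c 0 ^ 2 * ∏ k, c (x.1 k) =
      ∑ x ∈ (balancedConfigs ι).sigma fun ω => (levelSet ω 0).offDiag,
        c 1 * c (-1) * ∏ k, c (x.1 k) := by
  refine sum_nbij' (fun x => ⟨update (update x.1 x.2.1 0) x.2.2 0, x.2⟩)
    (fun y => ⟨update (update y.1 y.2.1 1) y.2.2 (-1), y.2⟩) ?_ ?_ ?_ ?_ ?_
  · rintro ⟨ω, i, j⟩ hx
    simp only [mem_sigma, mem_product, mem_levelSet] at hx
    have hij : i ≠ j := by rintro rfl; omega
    simp [update_update_zero_mem_balancedConfigs hx.1 hx.2.1 hx.2.2, hij]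
  · rintro ⟨ω, i, j⟩ hy
    simp only [mem_sigma, mem_offDiag, mem_levelSet] at hy
    simp [update_update_one_neg_one_mem_balancedConfigs hy.1 hy.2.1 hy.2.2.1 hy.2.2.2, hy.2.2.2]
  · rintro ⟨ω, i, j⟩ hx
    simp only [mem_sigma, mem_product, mem_levelSet] at hx
    have hij : i ≠ j := by rintro rfl; omega
    simpa [hx.2.1, hx.2.2] using update_update_restore ω hij 0 0
  · rintro ⟨ω, i, j⟩ hy
    simp only [mem_sigma, mem_offDiag, mem_levelSet] at hy
    simpa [hy.2.1, hy.2.2.1] using update_update_restore ω hy.2.2.2 1 (-1)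
  · rintro ⟨ω, i, j⟩ hx
    simp only [mem_sigma, mem_product, mem_levelSet] at hx
    have hij : i ≠ j := by rintro rfl; omega
    have h := mul_mul_prod_comp_update_update c ω hij 0 0
    rw [hx.2.1, hx.2.2] at h
    rw [h, sq]

theorem sq_mul_sum_card_sq_balancedConfigs {R : Type*} [CommSemiring R] (c : ℤ → R) :
    c 0 ^ 2 * ∑ ω ∈ balancedConfigs ι, (∏ i, c (ω i)) * (#(levelSet ω 1) : R) ^ 2 =
      c 1 * c (-1) * ∑ ω ∈ balancedConfigs ι, (∏ i, c (ω i)) * (#(levelSet ω 0).offDiag : R) := by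
  calc c 0 ^ 2 * ∑ ω ∈ balancedConfigs ι, (∏ i, c (ω i)) * (#(levelSet ω 1) : R) ^ 2
      = ∑ ω ∈ balancedConfigs ι, ∑ _p ∈ levelSet ω 1 ×ˢ levelSet ω (-1),
          c 0 ^ 2 * ∏ i, c (ω i) := by
        rw [mul_sum]
        refine sum_congr rfl fun ω hω => ?_
        rw [sum_const, card_product, ← (mem_filter.1 hω).2, nsmul_eq_mul]
        push_cast
        ring
    _ = ∑ ω ∈ balancedConfigs ι, ∑ _p ∈ (levelSet ω 0).offDiag, c 1 * c (-1) * ∏ i, c (ω i) := by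
        simpa only [sum_sigma] using sum_sigma_product_levelSet_eq_sum_sigma_offDiag c
    _ = _ := by
        rw [mul_sum]
        refine sum_congr rfl fun ω _ => ?_
        rw [sum_const, nsmul_eq_mul]
        ring

theorem sq_mul_sum_card_sq_balancedConfigs_le (c : ℤ → ℝ) (hc : ∀ x, 0 ≤ c x) :
    c 0 ^ 2 * ∑ ω ∈ balancedConfigs ι, (∏ i, c (ω i)) * (#(levelSet ω 1) : ℝ) ^ 2 ≤
      c 1 * c (-1) * Fintype.card ι ^ 2 * ∑ ω ∈ balancedConfigs ι, ∏ i, c (ω i) := by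
  rw [sq_mul_sum_card_sq_balancedConfigs, mul_assoc (c 1 * c (-1))]
  refine mul_le_mul_of_nonneg_left ?_ (mul_nonneg (hc 1) (hc (-1)))
  rw [mul_sum]
  refine sum_le_sum fun ω _ => ?_
  rw [mul_comm (_ ^ 2)]
  refine mul_le_mul_of_nonneg_left ?_ (prod_nonneg fun i _ => hc _)
  have : #(levelSet ω 0).offDiag ≤ Fintype.card ι ^ 2 := by
    rw [offDiag_card, sq]
    exact (Nat.sub_le _ _).trans (Nat.mul_le_mul (card_le_univ _) (card_le_univ _))
  exact_mod_cast this

theorem sum_mul_card_sq_div_sum_le (c : ℤ → ℝ) (hc : ∀ x, 0 ≤ c x) (hc₀ : 0 < c 0)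
    (hc₁ : c 1 * c (-1) * Fintype.card ι ^ 2 ≤ 1) :
    (∑ ω ∈ balancedConfigs ι, (∏ i, c (ω i)) * (#(levelSet ω 1) : ℝ) ^ 2) /
        ∑ ω ∈ balancedConfigs ι, ∏ i, c (ω i) ≤ (c 0)⁻¹ ^ 2 := by
  have hS₀ : 0 ≤ ∑ ω ∈ balancedConfigs ι, ∏ i, c (ω i) :=
    sum_nonneg fun ω _ => prod_nonneg fun i _ => hc _
  refine div_le_of_le_mul₀ hS₀ (by positivity) ?_
  have key := (sq_mul_sum_card_sq_balancedConfigs_le c hc).trans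
    (mul_le_of_le_one_left hS₀ hc₁)
  rw [inv_pow, ← div_eq_inv_mul, le_div_iff₀ (by positivity), mul_comm]
  exact key

end Configurations

lemma sum_mul_div_sum_le_of_sum_mul_sq_div_sum_le {ι : Type*} (s : Finset ι) {w f : ι → ℝ}
    (hw : ∀ i ∈ s, 0 ≤ w i) {a : ℝ} (ha : 0 ≤ a)
    (h : (∑ i ∈ s, w i * f i ^ 2) / ∑ i ∈ s, w i ≤ a ^ 2) :
    (∑ i ∈ s, w i * f i) / ∑ i ∈ s, w i ≤ a := by
  rcases (sum_nonneg hw).eq_or_lt with h0 | h0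
  · rw [← h0, div_zero]; exact ha
  have hCS : (∑ i ∈ s, w i * f i) ^ 2 ≤ (∑ i ∈ s, w i) * ∑ i ∈ s, w i * f i ^ 2 :=
    sum_sq_le_sum_mul_sum_of_sq_le_mul s hw (fun i hi => mul_nonneg (hw i hi) (sq_nonneg _))
      fun i _ => le_of_eq (by ring)
  refine le_of_abs_le (abs_le_of_sq_le_sq ?_ ha)
  rw [div_pow, div_le_iff₀ (by positivity)]
  calc (∑ i ∈ s, w i * f i) ^ 2 ≤ (∑ i ∈ s, w i) * ∑ i ∈ s, w i * f i ^ 2 := hCS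
    _ ≤ (∑ i ∈ s, w i) * (a ^ 2 * ∑ i ∈ s, w i) := by
      gcongr; rwa [div_le_iff₀ h0] at h
    _ = a ^ 2 * (∑ i ∈ s, w i) ^ 2 := by ring

lemma integral_cond_eq_sum_div {α : Type*} [MeasurableSpace α] [MeasurableSingletonClass α]
    {μ : Measure α} [IsFiniteMeasure μ] {D : Set α} {F : Finset α} (hDF : D =ᵐ[μ] (F : Set α))
    (f : α → ℝ) :
    ∫ x, f x ∂μ[|D] = (∑ x ∈ F, μ.real {x} * f x) / ∑ x ∈ F, μ.real {x} := by
  rw [ProbabilityTheory.cond, integral_smul_measure, Measure.restrict_congr_set hDF,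
    setIntegral_finset F IntegrableOn.finset, measure_congr hDF, sum_measureReal_singleton,
    ENNReal.toReal_inv, ← measureReal_def, div_eq_inv_mul]
  simp only [smul_eq_mul]

lemma ae_mem_piFinset {ι α : Type*} [Fintype ι] [DecidableEq ι] [MeasurableSpace α] [Countable α]
    [MeasurableSingletonClass α] {μ : ι → Measure α} [∀ i, SigmaFinite (μ i)] {s : ι → Finset α}
    (hs : ∀ i, ∀ x ∉ s i, μ i {x} = 0) :
    ∀ᵐ ω ∂Measure.pi μ, ω ∈ Fintype.piFinset s := by
  rw [ae_iff_of_countable]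
  intro ω hω
  rw [Measure.pi_singleton, prod_ne_zero_iff] at hω
  exact Fintype.mem_piFinset.2 fun i => by_contra fun h => hω i (mem_univ i) (hs i _ h)

noncomputable def lazyStepLaw (N : ℕ) : Measure ℤ :=
  (N : ℝ≥0∞)⁻¹ • Measure.dirac 1 + (N : ℝ≥0∞)⁻¹ • Measure.dirac (-1) +
    (1 - 2 * (N : ℝ≥0∞)⁻¹) • Measure.dirac 0

section LazyStepLaw

variable {N : ℕ}

instance [NeZero N] : IsFiniteMeasure (lazyStepLaw N) :=
  ⟨by simp [lazyStepLaw, NeZero.pos N, lt_of_le_of_lt tsub_le_self ENNReal.one_lt_top]⟩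

lemma lazyStepLaw_real_one : (lazyStepLaw N).real {1} = (N : ℝ)⁻¹ := by
  simp [lazyStepLaw, measureReal_def]

lemma lazyStepLaw_real_neg_one : (lazyStepLaw N).real {-1} = (N : ℝ)⁻¹ := by
  simp [lazyStepLaw, measureReal_def]

lemma lazyStepLaw_real_zero (hN : 2 ≤ N) : (lazyStepLaw N).real {0} = 1 - 2 / N := by
  have h : 2 * (N : ℝ≥0∞)⁻¹ ≤ 1 := by
    rw [← div_eq_mul_inv, ENNReal.div_le_iff (by simp; omega) (by simp), one_mul]
    exact_mod_cast hN
  simp [lazyStepLaw, measureReal_def, ENNReal.toReal_sub_of_le h, div_eq_mul_inv]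

lemma lazyStepLaw_singleton_of_notMem {x : ℤ} (hx : x ∉ ({1, -1, 0} : Finset ℤ)) :
    lazyStepLaw N {x} = 0 := by
  simp only [mem_insert, mem_singleton, not_or] at hx
  simp [lazyStepLaw, hx]

end LazyStepLaw

section ProductMeasure

variable {ι : Type*} [Fintype ι] {ρ : Measure ℤ} [IsFiniteMeasure ρ]

lemma measure_balanced_pos (hρ₀ : ρ {0} ≠ 0) :
    0 < (Measure.pi fun _ : ι => ρ) {ω | #(levelSet ω 1) = #(levelSet ω (-1))} := by
  have h0 : (0 : ι → ℤ) ∈ {ω : ι → ℤ | #(levelSet ω 1) = #(levelSet ω (-1))} := by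
    simp [levelSet]
  refine (pos_iff_ne_zero.2 ?_).trans_le (measure_mono (Set.singleton_subset_iff.2 h0))
  rw [Measure.pi_singleton]
  exact prod_ne_zero_iff.2 fun _ _ => hρ₀

lemma integral_cond_balanced_eq [DecidableEq ι] (hρ : ∀ x ∉ ({1, -1, 0} : Finset ℤ), ρ {x} = 0)
    (f : (ι → ℤ) → ℝ) :
    ∫ ω, f ω ∂(Measure.pi fun _ : ι => ρ)[|{ω | #(levelSet ω 1) = #(levelSet ω (-1))}] =
      (∑ ω ∈ balancedConfigs ι, (∏ i, ρ.real {ω i}) * f ω) /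
        ∑ ω ∈ balancedConfigs ι, ∏ i, ρ.real {ω i} := by
  have hDF : {ω : ι → ℤ | #(levelSet ω 1) = #(levelSet ω (-1))} =ᵐ[Measure.pi fun _ => ρ]
      (balancedConfigs ι : Set (ι → ℤ)) := by
    filter_upwards [ae_mem_piFinset fun _ => hρ] with ω hω
    change (_ = _) = (ω ∈ balancedConfigs ι)
    rw [balancedConfigs, mem_filter, eq_iff_iff]
    exact (and_iff_right hω).symm
  simp only [integral_cond_eq_sum_div hDF, measureReal_def, Measure.pi_singleton,
    ENNReal.toReal_prod]

end ProductMeasure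

/-- **Moment bounds for the jump count of the approximation scheme.**
Let `N ≥ 3` and let `ξ₁, …, ξ_N` be i.i.d. with values in `{−1, 0, 1}`,
`P(ξ_j = 1) = P(ξ_j = −1) = 1/N`, `P(ξ_j = 0) = 1 − 2/N` (encoded as the product
measure `P` on `Fin N → ℤ` of the common law `ρ`).  With `S⁺ = #{j : ξ_j = 1}` and
`S⁻ = #{j : ξ_j = −1}`, the event `{S⁺ = S⁻}` has positive probability,
`E[(S⁺)² | S⁺ = S⁻] ≤ (1 − 2/N)⁻²` and `E[S⁺ | S⁺ = S⁻] ≤ (1 − 2/N)⁻¹`. -/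
theorem scheme_jump_count_bound (N : ℕ) (hN : 3 ≤ N)
    (ρ : Measure ℤ)
    (hρ : ρ = (N : ℝ≥0∞)⁻¹ • Measure.dirac 1 + (N : ℝ≥0∞)⁻¹ • Measure.dirac (-1) +
      (1 - 2 * (N : ℝ≥0∞)⁻¹) • Measure.dirac 0)
    (P : Measure (Fin N → ℤ)) (hP : P = Measure.pi fun _ => ρ)
    (Splus Sminus : (Fin N → ℤ) → ℕ)
    (hSp : ∀ ω, Splus ω = (Finset.univ.filter (fun j => ω j = 1)).card)
    (hSm : ∀ ω, Sminus ω = (Finset.univ.filter (fun j => ω j = -1)).card)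
    (D : Set (Fin N → ℤ)) (hD : D = {ω | Splus ω = Sminus ω}) :
    0 < P D ∧
      (∫ ω, ((Splus ω : ℝ)) ^ 2 ∂(P[|D])) ≤ ((1 : ℝ) - 2 / N)⁻¹ ^ 2 ∧
      (∫ ω, ((Splus ω : ℝ)) ∂(P[|D])) ≤ ((1 : ℝ) - 2 / N)⁻¹ := by
  have : NeZero N := ⟨by omega⟩
  obtain rfl : ρ = lazyStepLaw N := hρ
  obtain rfl : D = {ω | #(levelSet ω 1) = #(levelSet ω (-1))} := by
    rw [hD]; simp only [hSp, hSm]; rfl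
  obtain rfl : Splus = fun ω => #(levelSet ω 1) := funext hSp
  subst hP
  have hq : (0 : ℝ) < 1 - 2 / N := by
    rw [sub_pos, div_lt_one (by positivity)]; exact_mod_cast (by omega : 2 < N)
  have hρ₀ := lazyStepLaw_real_zero (N := N) (by omega)
  have hρ₀_pos : 0 < (lazyStepLaw N).real {0} := hρ₀ ▸ hq
  have hsecond := sum_mul_card_sq_div_sum_le (ι := Fin N) (fun x => (lazyStepLaw N).real {x})
    (fun _ => measureReal_nonneg) hρ₀_pos (le_of_eq (by
      simp only [lazyStepLaw_real_one, lazyStepLaw_real_neg_one, Fintype.card_fin]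
      field_simp))
  rw [hρ₀] at hsecond
  refine ⟨measure_balanced_pos ?_, ?_, ?_⟩
  · exact (ENNReal.toReal_pos_iff.1 hρ₀_pos).1.ne'
  · rw [integral_cond_balanced_eq fun _ => lazyStepLaw_singleton_of_notMem]
    exact hsecond
  · rw [integral_cond_balanced_eq fun _ => lazyStepLaw_singleton_of_notMem]
    exact sum_mul_div_sum_le_of_sum_mul_sq_div_sum_le _
      (fun _ _ => prod_nonneg fun _ _ => measureReal_nonneg) (inv_nonneg.2 hq.le) hsecond
end

section
/- Let γ ∈ (0, 1/2), K ≥ 0, M ≥ 0, T > 0, and let b : ℝ → ℝ be twice differentiable with |b′(x)| ≤ K(1+|x|)^{−γ} and |b″(x)| ≤ M for all x. Set c₁ = K/(1−γ), c₂ = K|b(0)| + M/2, c₃ = K²/(1−γ), and β′(x) = b(x)b′(x) + b″(x)/2. Then for every continuous function X : [0,T] → ℝ, writing Ψ = ∫₀^T X(s)² ds + X(T)², one has ∫₀^T β′(X(s))² ds + b(X(T))² ≤ 2(b(0)² + (c₂² + 2c₃²)T) + 4c₃²·T^{2γ}·Ψ^{1−2γ} + 2c₁²·Ψ^{1−γ}.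 -/
open Real MeasureTheory intervalIntegral

/-!
Comparing `b - b 0` with `K/(1-γ) ((1+t)^{1-γ} - 1)`, whose derivative is the bound
`K (1+t)^{-γ}` on `b'`, gives `|b x| ≤ |b 0| + c₁ |x|^{1-γ}`; multiplying by the bound on `b'`
gives `|β'(x)| ≤ c₂ + c₃ |x|^{1-2γ}`. After squaring, `β'(X s)²` and `b(X T)²` are controlled by
`(X s²)^{1-2γ}` and `(X T²)^{1-γ}`, and Jensen's inequality for the concave map `y ↦ y^{1-2γ}`
turns `∫₀^T (X s²)^{1-2γ} ds` into `T^{2γ} (∫₀^T X s² ds)^{1-2γ}`. Both `∫₀^T X²` and `X(T)²`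
are at most `Ψ`.
-/

theorem rpow_mul_one_add_rpow_neg_le {t a γ : ℝ} (ht : 0 ≤ t) (ha : a ≠ 0) (hγ : 0 ≤ γ) :
    t ^ a * (1 + t) ^ (-γ) ≤ t ^ (a - γ) := by
  rcases ht.eq_or_lt with rfl | ht
  · simpa [zero_rpow ha] using rpow_nonneg le_rfl _
  calc t ^ a * (1 + t) ^ (-γ) ≤ t ^ a * t ^ (-γ) :=
        mul_le_mul_of_nonneg_left (rpow_le_rpow_of_nonpos ht (by linarith) (by linarith))
          (rpow_nonneg ht.le a)
    _ = t ^ (a - γ) := by rw [← rpow_add ht, sub_eq_add_neg]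

theorem sq_le_of_abs_le_add_mul_rpow {u c d x p : ℝ} (h : |u| ≤ c + d * |x| ^ p) :
    u ^ 2 ≤ 2 * c ^ 2 + 2 * d ^ 2 * (x ^ 2) ^ p := by
  have hsq : u ^ 2 ≤ (c + d * |x| ^ p) ^ 2 :=
    sq_le_sq' (by linarith [neg_abs_le u]) ((le_abs_self u).trans h)
  calc u ^ 2 ≤ 2 * (c ^ 2 + (d * |x| ^ p) ^ 2) := hsq.trans add_sq_le
    _ = 2 * c ^ 2 + 2 * d ^ 2 * (x ^ 2) ^ p := by
      rw [mul_pow, rpow_pow_comm (abs_nonneg x), sq_abs]; ring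

theorem integral_rpow_le_mul_rpow_integral {f : ℝ → ℝ} {a b p : ℝ} (hab : a < b)
    (hf : IntervalIntegrable f volume a b)
    (hfp : IntervalIntegrable (fun x => f x ^ p) volume a b)
    (hf₀ : ∀ x ∈ Set.Ioc a b, 0 ≤ f x) (hp₀ : 0 ≤ p) (hp₁ : p ≤ 1) :
    ∫ x in a..b, f x ^ p ≤ (b - a) ^ (1 - p) * (∫ x in a..b, f x) ^ p := by
  have hba : 0 < b - a := sub_pos.2 hab
  have hvol : volume (Set.Ioc a b) = ENNReal.ofReal (b - a) := Real.volume_Ioc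
  have jensen := (Real.concaveOn_rpow hp₀ hp₁).le_map_set_average
    (continuousOn_id.rpow_const fun _ _ => Or.inr hp₀) isClosed_Ici
    (by simp [hvol, hab]) (by simp [hvol])
    ((ae_restrict_iff' measurableSet_Ioc).2 (Filter.Eventually.of_forall hf₀)) hf.1 hfp.1
  simp only [setAverage_eq, measureReal_def, hvol, ENNReal.toReal_ofReal hba.le,
    smul_eq_mul, ← intervalIntegral.integral_of_le hab.le] at jensen
  have hI : 0 ≤ ∫ x in a..b, f x := by
    rw [intervalIntegral.integral_of_le hab.le]
    exact setIntegral_nonneg measurableSet_Ioc hf₀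
  rw [Real.mul_rpow (inv_nonneg.2 hba.le) hI, Real.inv_rpow hba.le, inv_mul_le_iff₀ hba,
    ← mul_assoc, ← Real.rpow_neg hba.le] at jensen
  rwa [sub_eq_add_neg 1 p, Real.rpow_add hba, Real.rpow_one]

theorem integral_sq_comp_le_of_abs_le_add_mul_rpow {f X : ℝ → ℝ} {a b c d p : ℝ} (hab : a < b)
    (hp₀ : 0 ≤ p) (hp₁ : p ≤ 1) (hf : Measurable f) (hX : ContinuousOn X (Set.Icc a b))
    (hfX : ∀ x, |f x| ≤ c + d * |x| ^ p) :
    ∫ s in a..b, f (X s) ^ 2 ≤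
      2 * c ^ 2 * (b - a) + 2 * d ^ 2 * ((b - a) ^ (1 - p) * (∫ s in a..b, X s ^ 2) ^ p) := by
  have hXu : ContinuousOn X (Set.uIcc a b) := by rwa [Set.uIcc_of_le hab.le]
  have hX2 : IntervalIntegrable (fun s => X s ^ 2) volume a b := (hXu.pow 2).intervalIntegrable
  have hX2p : IntervalIntegrable (fun s => (X s ^ 2) ^ p) volume a b :=
    ((hXu.pow 2).rpow_const fun _ _ => Or.inr hp₀).intervalIntegrable
  have hmajor : IntervalIntegrable (fun s => 2 * c ^ 2 + 2 * d ^ 2 * (X s ^ 2) ^ p) volume a b :=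
    intervalIntegrable_const.add (hX2p.const_mul _)
  have hpt : ∀ s, f (X s) ^ 2 ≤ 2 * c ^ 2 + 2 * d ^ 2 * (X s ^ 2) ^ p := fun s =>
    sq_le_of_abs_le_add_mul_rpow (hfX (X s))
  have hfX2 : IntervalIntegrable (fun s => f (X s) ^ 2) volume a b := by
    refine hmajor.mono_fun ?_ (Filter.Eventually.of_forall fun s => ?_)
    · exact ((hf.comp_aemeasurable ((hXu.mono Set.uIoc_subset_uIcc).aemeasurable
        measurableSet_uIoc)).pow_const 2).aestronglyMeasurable
    · dsimp only
      rw [norm_of_nonneg (sq_nonneg _), norm_of_nonneg ((sq_nonneg _).trans (hpt s))]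
      exact hpt s
  calc ∫ s in a..b, f (X s) ^ 2 ≤ ∫ s in a..b, 2 * c ^ 2 + 2 * d ^ 2 * (X s ^ 2) ^ p :=
        integral_mono_on hab.le hfX2 hmajor fun s _ => hpt s
    _ = 2 * c ^ 2 * (b - a) + 2 * d ^ 2 * ∫ s in a..b, (X s ^ 2) ^ p := by
        rw [integral_add intervalIntegrable_const (hX2p.const_mul _),
          intervalIntegral.integral_const, intervalIntegral.integral_const_mul, smul_eq_mul,
          mul_comm (b - a)]
    _ ≤ _ := by
        gcongr
        exact integral_rpow_le_mul_rpow_integral hab hX2 hX2p (fun _ _ => sq_nonneg _) hp₀ hp₁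

section SublinearDerivative

variable {b : ℝ → ℝ} {K γ : ℝ}

theorem abs_sub_le_of_abs_deriv_le_one_add_rpow_neg (hγ : γ < 1) (hb : Differentiable ℝ b)
    (hbd : ∀ x, |deriv b x| ≤ K * (1 + |x|) ^ (-γ)) {x : ℝ} (hx : 0 ≤ x) :
    |b x - b 0| ≤ K / (1 - γ) * ((1 + x) ^ (1 - γ) - 1) := by
  have hB : ∀ t ∈ Set.Ico 0 x, HasDerivWithinAt (fun t => K / (1 - γ) * ((1 + t) ^ (1 - γ) - 1))
      (K * (1 + |t|) ^ (-γ)) (Set.Ici t) t := by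
    intro t ht
    have hpos : 1 + t ≠ 0 := by linarith [ht.1]
    have := ((((hasDerivAt_id' t).const_add 1).rpow_const (p := 1 - γ) (Or.inl hpos)).sub_const
      1).const_mul (K / (1 - γ))
    refine (this.congr_deriv ?_).hasDerivWithinAt
    rw [abs_of_nonneg ht.1, sub_sub_cancel_left]
    field_simp [show 1 - γ ≠ 0 by linarith]
  simpa [Real.norm_eq_abs] using image_norm_le_of_norm_deriv_right_le_deriv_boundary'
    (f := fun t => b t - b 0) (hb.continuous.sub continuous_const).continuousOn
    (fun t _ => ((hb t).hasDerivAt.sub_const (b 0)).hasDerivWithinAt) (by simp)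
    (continuousOn_const.mul (((continuousOn_const.add continuousOn_id).rpow_const
      fun _ _ => Or.inr (by linarith)).sub continuousOn_const))
    hB (fun t _ => hbd t) ⟨hx, le_rfl⟩

theorem abs_le_abs_zero_add_rpow_of_abs_deriv_le (hγ₀ : 0 ≤ γ) (hγ₁ : γ < 1)
    (hb : Differentiable ℝ b) (hbd : ∀ x, |deriv b x| ≤ K * (1 + |x|) ^ (-γ)) (x : ℝ) :
    |b x| ≤ |b 0| + K / (1 - γ) * |x| ^ (1 - γ) := by
  have hK : 0 ≤ K := by simpa using (abs_nonneg _).trans (hbd 0)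
  have hdiff : |b x - b 0| ≤ K / (1 - γ) * ((1 + |x|) ^ (1 - γ) - 1) := by
    rcases le_total 0 x with hx | hx
    · simpa [abs_of_nonneg hx] using abs_sub_le_of_abs_deriv_le_one_add_rpow_neg hγ₁ hb hbd hx
    · have hb_neg : ∀ y, |deriv (fun y => b (-y)) y| ≤ K * (1 + |y|) ^ (-γ) := fun y => by
        simpa [deriv_comp_neg] using hbd (-y)
      simpa [abs_of_nonpos hx] using abs_sub_le_of_abs_deriv_le_one_add_rpow_neg hγ₁
        (hb.comp differentiable_neg) hb_neg (neg_nonneg.2 hx)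
  have hsub : (1 + |x|) ^ (1 - γ) ≤ 1 + |x| ^ (1 - γ) := by
    simpa using Real.rpow_add_le_add_rpow zero_le_one (abs_nonneg x) (by linarith) (by linarith)
  have hc₁ : 0 ≤ K / (1 - γ) := div_nonneg hK (by linarith)
  calc |b x| ≤ |b 0| + |b x - b 0| := by linarith [abs_sub_abs_le_abs_sub (b x) (b 0)]
    _ ≤ |b 0| + K / (1 - γ) * |x| ^ (1 - γ) :=
      add_le_add_right (hdiff.trans (mul_le_mul_of_nonneg_left (by linarith) hc₁)) _

theorem abs_mul_deriv_add_deriv_deriv_le {M : ℝ} (hγ₀ : 0 ≤ γ) (hγ₁ : γ < 1)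
    (hb : Differentiable ℝ b) (hbd : ∀ x, |deriv b x| ≤ K * (1 + |x|) ^ (-γ))
    (hbd2 : ∀ x, |deriv (deriv b) x| ≤ M) (x : ℝ) :
    |b x * deriv b x + deriv (deriv b) x / 2| ≤
      (K * |b 0| + M / 2) + K ^ 2 / (1 - γ) * |x| ^ (1 - 2 * γ) := by
  have hK : 0 ≤ K := by simpa using (abs_nonneg _).trans (hbd 0)
  have hgrowth := abs_le_abs_zero_add_rpow_of_abs_deriv_le hγ₀ hγ₁ hb hbd x
  have hdecay : (1 + |x|) ^ (-γ) ≤ 1 :=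
    rpow_le_one_of_one_le_of_nonpos (by linarith [abs_nonneg x]) (by linarith)
  have hprod : |b x| * |deriv b x| ≤ K * |b 0| + K ^ 2 / (1 - γ) * |x| ^ (1 - 2 * γ) :=
    calc |b x| * |deriv b x|
        ≤ (|b 0| + K / (1 - γ) * |x| ^ (1 - γ)) * (K * (1 + |x|) ^ (-γ)) :=
          mul_le_mul hgrowth (hbd x) (abs_nonneg _) ((abs_nonneg _).trans hgrowth)
      _ = K * |b 0| * (1 + |x|) ^ (-γ) +
            K ^ 2 / (1 - γ) * (|x| ^ (1 - γ) * (1 + |x|) ^ (-γ)) := by ring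
      _ ≤ K * |b 0| + K ^ 2 / (1 - γ) * |x| ^ (1 - 2 * γ) := by
          refine add_le_add (mul_le_of_le_one_right (by positivity) hdecay)
            (mul_le_mul_of_nonneg_left ?_ (div_nonneg (sq_nonneg K) (by linarith)))
          rw [show 1 - 2 * γ = 1 - γ - γ by ring]
          exact rpow_mul_one_add_rpow_neg_le (abs_nonneg x) (by linarith) hγ₀
  have hsecond : |deriv (deriv b) x / 2| ≤ M / 2 := by
    rw [abs_div, abs_two]; linarith [hbd2 x]
  calc |b x * deriv b x + deriv (deriv b) x / 2|
      ≤ |b x| * |deriv b x| + |deriv (deriv b) x / 2| := by rw [← abs_mul]; exact abs_add_le _ _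
    _ ≤ _ := by linarith

end SublinearDerivative

theorem girsanov_drift_square_bound_general (γ K M T : ℝ)
    (hγ₀ : 0 < γ) (hγ₁ : γ < 1 / 2) (hT : 0 < T)
    (b : ℝ → ℝ) (hb : Differentiable ℝ b)
    (hbd : ∀ x : ℝ, |deriv b x| ≤ K * (1 + |x|) ^ (-γ))
    (hbd2 : ∀ x : ℝ, |deriv (deriv b) x| ≤ M)
    (c₁ c₂ c₃ : ℝ) (hc₁ : c₁ = K / (1 - γ)) (hc₂ : c₂ = K * |b 0| + M / 2)
    (hc₃ : c₃ = K ^ 2 / (1 - γ))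
    (β' : ℝ → ℝ) (hβ' : ∀ x : ℝ, β' x = b x * deriv b x + deriv (deriv b) x / 2)
    (X : ℝ → ℝ) (hX : ContinuousOn X (Set.Icc 0 T))
    (Ψ : ℝ) (hΨ : Ψ = (∫ s in (0:ℝ)..T, (X s) ^ 2) + (X T) ^ 2) :
    (∫ s in (0:ℝ)..T, (β' (X s)) ^ 2) + (b (X T)) ^ 2 ≤
      2 * ((b 0) ^ 2 + (c₂ ^ 2 + 2 * c₃ ^ 2) * T) +
        4 * c₃ ^ 2 * T ^ (2 * γ) * Ψ ^ (1 - 2 * γ) + 2 * c₁ ^ 2 * Ψ ^ (1 - γ) := by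
  have hβ'_growth : ∀ x, |β' x| ≤ c₂ + c₃ * |x| ^ (1 - 2 * γ) := fun x => by
    rw [hβ', hc₂, hc₃]
    exact abs_mul_deriv_add_deriv_deriv_le hγ₀.le (by linarith) hb hbd hbd2 x
  have hβ'_meas : Measurable β' := by
    rw [funext hβ']
    exact (hb.continuous.measurable.mul (measurable_deriv b)).add
      ((measurable_deriv _).div_const 2)
  have hdrift := integral_sq_comp_le_of_abs_le_add_mul_rpow hT (by linarith) (by linarith)
    hβ'_meas hX hβ'_growth
  rw [sub_zero, sub_sub_cancel] at hdrift
  have hend : b (X T) ^ 2 ≤ 2 * |b 0| ^ 2 + 2 * c₁ ^ 2 * (X T ^ 2) ^ (1 - γ) :=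
    sq_le_of_abs_le_add_mul_rpow
      (hc₁ ▸ abs_le_abs_zero_add_rpow_of_abs_deriv_le hγ₀.le (by linarith) hb hbd (X T))
  rw [sq_abs] at hend
  have hA₀ : 0 ≤ ∫ s in (0:ℝ)..T, X s ^ 2 := integral_nonneg hT.le fun s _ => sq_nonneg _
  have hAΨ : ∫ s in (0:ℝ)..T, X s ^ 2 ≤ Ψ := by rw [hΨ]; linarith [sq_nonneg (X T)]
  have hΨ₀ : 0 ≤ Ψ := hA₀.trans hAΨ
  calc (∫ s in (0:ℝ)..T, (β' (X s)) ^ 2) + (b (X T)) ^ 2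
      ≤ 2 * c₂ ^ 2 * T + 2 * c₃ ^ 2 * (T ^ (2 * γ) * (∫ s in (0:ℝ)..T, X s ^ 2) ^ (1 - 2 * γ))
        + (2 * b 0 ^ 2 + 2 * c₁ ^ 2 * (X T ^ 2) ^ (1 - γ)) := add_le_add hdrift hend
    _ ≤ 2 * c₂ ^ 2 * T + 2 * c₃ ^ 2 * (T ^ (2 * γ) * Ψ ^ (1 - 2 * γ))
        + (2 * b 0 ^ 2 + 2 * c₁ ^ 2 * Ψ ^ (1 - γ)) := by
      gcongr <;> linarith
    _ ≤ _ := by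
      have hslack : 0 ≤ c₃ ^ 2 * (2 * T + T ^ (2 * γ) * Ψ ^ (1 - 2 * γ)) := by positivity
      linarith

/-- **Quadratic pathwise bound on the Girsanov drift terms.**
For `γ ∈ (0, 1/2)`, `b` twice differentiable with `|b′| ≤ K(1+|x|)^{−γ}`, `|b″| ≤ M`,
`c₁ = K/(1−γ)`, `c₂ = K|b(0)| + M/2`, `c₃ = K²/(1−γ)`, `β′ = b b′ + b″/2`, and any
continuous `X : [0,T] → ℝ`, with `Ψ = ∫₀^T X(s)² ds + X(T)²`:
`∫₀^T β′(X s)² ds + b(X T)² ≤ 2(b(0)² + (c₂² + 2c₃²)T) + 4c₃² T^{2γ} Ψ^{1−2γ} + 2c₁² Ψ^{1−γ}`. -/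
theorem girsanov_drift_square_bound (γ K M T : ℝ)
    (hγ₀ : 0 < γ) (hγ₁ : γ < 1 / 2) (hK : 0 ≤ K) (hM : 0 ≤ M) (hT : 0 < T)
    (b : ℝ → ℝ) (hb : Differentiable ℝ b) (hb' : Differentiable ℝ (deriv b))
    (hbd : ∀ x : ℝ, |deriv b x| ≤ K * (1 + |x|) ^ (-γ))
    (hbd2 : ∀ x : ℝ, |deriv (deriv b) x| ≤ M)
    (c₁ c₂ c₃ : ℝ) (hc₁ : c₁ = K / (1 - γ)) (hc₂ : c₂ = K * |b 0| + M / 2)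
    (hc₃ : c₃ = K ^ 2 / (1 - γ))
    (β' : ℝ → ℝ) (hβ' : ∀ x : ℝ, β' x = b x * deriv b x + deriv (deriv b) x / 2)
    (X : ℝ → ℝ) (hX : ContinuousOn X (Set.Icc 0 T))
    (Ψ : ℝ) (hΨ : Ψ = (∫ s in (0:ℝ)..T, (X s) ^ 2) + (X T) ^ 2) :
    (∫ s in (0:ℝ)..T, (β' (X s)) ^ 2) + (b (X T)) ^ 2 ≤
      2 * ((b 0) ^ 2 + (c₂ ^ 2 + 2 * c₃ ^ 2) * T) +
        4 * c₃ ^ 2 * T ^ (2 * γ) * Ψ ^ (1 - 2 * γ) + 2 * c₁ ^ 2 * Ψ ^ (1 - γ) :=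
  girsanov_drift_square_bound_general γ K M T hγ₀ hγ₁ hT b hb hbd hbd2 c₁ c₂ c₃ hc₁ hc₂ hc₃ β' hβ' X
    hX Ψ hΨ
end
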